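/- arXiv:2508.10225 — 8 statements merged into one kernel-verified Lean document; each statement's English description precedes it below -/
import Mathlib

section
/- Every g ∈ GL₃(ℚ_p) can be written uniquely as g = p̄ · w · k, where p̄ ∈ P̄₁(ℚ_p), w ∈ {I₃, σ, τ}, and k ∈ Iw ∩ w⁻¹N₁(ℤ_p)w. Consequently, the map s : GL₃(ℚ_p) → P̄₁(ℚ_p) sending g to the element p̄ in its decomposition is well-defined, continuous, and satisfies s(qg) = q·s(g) for all q ∈ P̄₁(ℚ_p) and g ∈ GL₃(ℚ_p). -/
open Matrix

noncomputable section

/-- The ring of `3 × 3` matrices over `ℚ_p`. -/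
abbrev M3 (p : ℕ) [Fact p.Prime] := Matrix (Fin 3) (Fin 3) ℚ_[p]

/-- `P̄₁(ℚ_p) = {g ∈ GL₃(ℚ_p) : g₁₂ = g₁₃ = 0}`. -/
def P1bar (p : ℕ) [Fact p.Prime] : Set (M3 p) :=
  {g | IsUnit g.det ∧ g 0 1 = 0 ∧ g 0 2 = 0}

/-- `N₁(ℤ_p) = {[[1,x,y],[0,1,0],[0,0,1]] : x, y ∈ ℤ_p}`. -/
def N1Z (p : ℕ) [Fact p.Prime] : Set (M3 p) :=
  {g | ∃ x y : ℚ_[p], ‖x‖ ≤ 1 ∧ ‖y‖ ≤ 1 ∧ g = !![1, x, y; 0, 1, 0; 0, 0, 1]}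

/-- `Iw = {k ∈ GL₃(ℤ_p) : k₁₂, k₁₃, k₂₃ ∈ pℤ_p}`, the Iwahori subgroup. -/
def Iw (p : ℕ) [Fact p.Prime] : Set (M3 p) :=
  {k | (∀ i j, ‖k i j‖ ≤ 1) ∧ ‖k.det‖ = 1 ∧ ‖k 0 1‖ < 1 ∧ ‖k 0 2‖ < 1 ∧ ‖k 1 2‖ < 1}

/-- The set of Weyl representatives `{I₃, σ, τ}`. -/
def Wrep (p : ℕ) [Fact p.Prime] : Set (M3 p) :=
  {1, !![0, 1, 0; 1, 0, 0; 0, 0, 1], !![0, 0, 1; 1, 0, 0; 0, 1, 0]}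

namespace S0
variable {p : ℕ} [Fact p.Prime]

def mT (x y : ℚ_[p]) : M3 p := !![x, y, 1; 1, 0, 0; 0, 1, 0]
def mS (x y : ℚ_[p]) : M3 p := !![x, 1, y; 1, 0, 0; 0, 0, 1]
def mO (x y : ℚ_[p]) : M3 p := !![1, x, y; 0, 1, 0; 0, 0, 1]
def miT (x y : ℚ_[p]) : M3 p := !![0, 1, 0; 0, 0, 1; 1, -x, -y]
def miS (x y : ℚ_[p]) : M3 p := !![0, 1, 0; 1, -x, -y; 0, 0, 1]
def miO (x y : ℚ_[p]) : M3 p := !![1, -x, -y; 0, 1, 0; 0, 0, 1]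
def kT (x y : ℚ_[p]) : M3 p := !![1, 0, 0; 0, 1, 0; x, y, 1]
def kS (x y : ℚ_[p]) : M3 p := !![1, 0, 0; x, 1, y; 0, 0, 1]
def wS : M3 p := !![0, 1, 0; 1, 0, 0; 0, 0, 1]
def wT : M3 p := !![0, 0, 1; 1, 0, 0; 0, 1, 0]
def wTi : M3 p := !![0, 1, 0; 0, 0, 1; 1, 0, 0]

variable (x y : ℚ_[p])

lemma mT_miT : mT x y * miT x y = 1 := by
  simp [mT, miT, mul_fin_three, one_fin_three]
lemma miT_mT : miT x y * mT x y = 1 := by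
  simp [mT, miT, mul_fin_three, one_fin_three]
lemma mS_miS : mS x y * miS x y = 1 := by
  simp [mS, miS, mul_fin_three, one_fin_three]
lemma miS_mS : miS x y * mS x y = 1 := by
  simp [mS, miS, mul_fin_three, one_fin_three]
lemma mO_miO : mO x y * miO x y = 1 := by
  simp [mO, miO, mul_fin_three, one_fin_three]
lemma miO_mO : miO x y * mO x y = 1 := by
  simp [mO, miO, mul_fin_three, one_fin_three]
lemma wT_kT : wT * kT x y = mT x y := by
  simp [wT, kT, mT, mul_fin_three, vecHead, vecTail, Function.comp]
lemma wS_kS : wS * kS x y = mS x y := by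
  simp [wS, kS, mS, mul_fin_three, vecHead, vecTail, Function.comp]
lemma mO_wT : mO x y * wT = mT x y := by
  simp [mO, wT, mT, mul_fin_three, vecHead, vecTail, Function.comp]
lemma mO_wS : mO x y * wS = mS x y := by
  simp [mO, wS, mS, mul_fin_three, vecHead, vecTail, Function.comp]
lemma wTi_wT : (wTi : M3 p) * wT = 1 := by
  simp [wTi, wT, mul_fin_three, one_fin_three]
lemma wS_wS : (wS : M3 p) * wS = 1 := by
  simp [wS, mul_fin_three, one_fin_three]
lemma wTi_mT : wTi * mT x y = kT x y := by
  ext i j; fin_cases i <;> fin_cases j <;>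
    simp [wTi, mT, kT, mul_apply, Fin.sum_univ_three, vecHead, vecTail, Function.comp] <;>
    exact Or.inr rfl
lemma wS_mS : wS * mS x y = kS x y := by
  ext i j; fin_cases i <;> fin_cases j <;>
    simp [wS, mS, kS, mul_apply, Fin.sum_univ_three, vecHead, vecTail, Function.comp] <;>
    exact Or.inr rfl
lemma det_miT : (miT x y).det = 1 := by simp [miT, det_fin_three]
lemma det_miS : (miS x y).det = -1 := by simp [miS, det_fin_three, vecHead, vecTail, Function.comp]
lemma det_miO : (miO x y).det = 1 := by simp [miO, det_fin_three, vecHead, vecTail, Function.comp]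
lemma det_kT : (kT x y).det = 1 := by simp [kT, det_fin_three]
lemma det_kS : (kS x y).det = 1 := by simp [kS, det_fin_three, vecHead, vecTail, Function.comp]
lemma det_mO : (mO x y).det = 1 := by simp [mO, det_fin_three, vecHead, vecTail, Function.comp]

def bT (g : M3 p) : Prop := ‖g 0 0‖ ≤ ‖g 0 2‖ ∧ ‖g 0 1‖ ≤ ‖g 0 2‖
def bS (g : M3 p) : Prop := ‖g 0 0‖ ≤ ‖g 0 1‖

open Classical in
noncomputable def wkInv (g : M3 p) : M3 p :=
  if bT g then miT (g 0 0 / g 0 2) (g 0 1 / g 0 2)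
  else if bS g then miS (g 0 0 / g 0 1) (g 0 2 / g 0 1)
  else miO (g 0 1 / g 0 0) (g 0 2 / g 0 0)

open Classical in
noncomputable def wFun (g : M3 p) : M3 p := if bT g then wT else if bS g then wS else 1

open Classical in
noncomputable def kFun (g : M3 p) : M3 p :=
  if bT g then kT (g 0 0 / g 0 2) (g 0 1 / g 0 2)
  else if bS g then kS (g 0 0 / g 0 1) (g 0 2 / g 0 1)
  else mO (g 0 1 / g 0 0) (g 0 2 / g 0 0)

noncomputable def sFun (g : M3 p) : M3 p := g * wkInv g

lemma row0_ne {g : M3 p} (hd : IsUnit g.det) :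
    ¬ (g 0 0 = 0 ∧ g 0 1 = 0 ∧ g 0 2 = 0) := by
  rintro ⟨h0, h1, h2⟩
  have : g.det = 0 := by
    apply Matrix.det_eq_zero_of_row_eq_zero 0
    intro j; fin_cases j <;> assumption
  exact hd.ne_zero this

lemma caseT {g : M3 p} (hd : IsUnit g.det) (h : bT g) : g 0 2 ≠ 0 := by
  intro h2
  obtain ⟨ha, hb⟩ := h
  rw [h2, norm_zero] at ha hb
  exact row0_ne hd ⟨norm_le_zero_iff.mp ha, norm_le_zero_iff.mp hb, h2⟩

lemma caseS {g : M3 p} (hT : ¬ bT g) (hS : bS g) :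
    g 0 1 ≠ 0 ∧ ‖g 0 2‖ < ‖g 0 1‖ := by
  have h1 : g 0 1 ≠ 0 := by
    intro h1
    have hS' : ‖g 0 0‖ ≤ ‖g 0 1‖ := hS
    rw [h1, norm_zero] at hS'
    have h0 : ‖g 0 0‖ = 0 := le_antisymm hS' (norm_nonneg _)
    exact hT ⟨by simp [h0], by simp [h1]⟩
  refine ⟨h1, ?_⟩
  by_contra hle
  push_neg at hle
  exact hT ⟨le_trans hS hle, hle⟩

lemma caseO {g : M3 p} (hT : ¬ bT g) (hS : ¬ bS g) :
    g 0 0 ≠ 0 ∧ ‖g 0 1‖ < ‖g 0 0‖ ∧ ‖g 0 2‖ < ‖g 0 0‖ := by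
  have h1 : ‖g 0 1‖ < ‖g 0 0‖ := not_le.mp hS
  have h0 : g 0 0 ≠ 0 := by
    intro h0
    rw [h0, norm_zero] at h1
    exact absurd h1 (norm_nonneg _).not_gt
  refine ⟨h0, h1, ?_⟩
  by_contra hle
  push_neg at hle
  exact hT ⟨hle, le_of_lt (lt_of_lt_of_le h1 hle)⟩

lemma toT {g : M3 p} (h0 : ‖g 0 0‖ ≤ ‖g 0 2‖) (h1 : ‖g 0 1‖ ≤ ‖g 0 2‖) : bT g := ⟨h0, h1⟩

lemma toS {g : M3 p} (h0 : ‖g 0 0‖ ≤ ‖g 0 1‖) (h2 : ‖g 0 2‖ < ‖g 0 1‖) :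
    ¬ bT g ∧ bS g :=
  ⟨fun h => absurd h.2 (not_le.mpr h2), h0⟩

lemma toO {g : M3 p} (h1 : ‖g 0 1‖ < ‖g 0 0‖) (h2 : ‖g 0 2‖ < ‖g 0 0‖) :
    ¬ bT g ∧ ¬ bS g :=
  ⟨fun h => absurd h.1 (not_le.mpr h2), not_le.mpr h1⟩

lemma one_mem_Wrep : (1 : M3 p) ∈ Wrep p := Set.mem_insert _ _
lemma wS_mem_Wrep : (wS : M3 p) ∈ Wrep p :=
  Set.mem_insert_iff.mpr (Or.inr (Set.mem_insert _ _))
lemma wT_mem_Wrep : (wT : M3 p) ∈ Wrep p :=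
  Set.mem_insert_iff.mpr (Or.inr (Set.mem_insert_iff.mpr (Or.inr rfl)))

lemma mO_mem_N1Z {x y : ℚ_[p]} (hx : ‖x‖ ≤ 1) (hy : ‖y‖ ≤ 1) : mO x y ∈ N1Z p :=
  ⟨x, y, hx, hy, rfl⟩

lemma kT_mem_Iw {x y : ℚ_[p]} (hx : ‖x‖ ≤ 1) (hy : ‖y‖ ≤ 1) : kT x y ∈ Iw p := by
  refine ⟨fun i j => ?_, by rw [det_kT]; norm_num, ?_, ?_, ?_⟩ <;>
    [skip; norm_num [kT, vecHead, vecTail, cons_val_two]; norm_num [kT, vecHead, vecTail, cons_val_two];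
     norm_num [kT, vecHead, vecTail, cons_val_two]]
  fin_cases i <;> fin_cases j <;> simp [kT, vecHead, vecTail] <;> assumption

lemma kS_mem_Iw {x y : ℚ_[p]} (hx : ‖x‖ ≤ 1) (hy : ‖y‖ < 1) : kS x y ∈ Iw p := by
  refine ⟨fun i j => ?_, by rw [det_kS]; norm_num, ?_, ?_, ?_⟩ <;>
    [skip; norm_num [kS, vecHead, vecTail, cons_val_two]; norm_num [kS, vecHead, vecTail, cons_val_two];
     simpa [kS, vecHead, vecTail] using hy]
  fin_cases i <;> fin_cases j <;> simp [kS, vecHead, vecTail] <;>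
    first | assumption | exact le_of_lt hy

lemma mO_mem_Iw {x y : ℚ_[p]} (hx : ‖x‖ < 1) (hy : ‖y‖ < 1) : mO x y ∈ Iw p := by
  refine ⟨fun i j => ?_, by rw [det_mO]; norm_num, ?_, ?_, ?_⟩ <;>
    [skip; simpa [mO, vecHead, vecTail] using hx; simpa [mO, vecHead, vecTail] using hy;
     norm_num [mO, vecHead, vecTail, cons_val_two]]
  fin_cases i <;> fin_cases j <;> simp [mO, vecHead, vecTail] <;>
    first | exact le_of_lt hx | exact le_of_lt hy

lemma row0_mul {q : M3 p} (h1 : q 0 1 = 0) (h2 : q 0 2 = 0) (M : M3 p) (j : Fin 3) :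
    (q * M) 0 j = q 0 0 * M 0 j := by
  simp [mul_apply, Fin.sum_univ_three, h1, h2]

lemma P00_ne {q : M3 p} (hq : q ∈ P1bar p) : q 0 0 ≠ 0 := fun h0 =>
  row0_ne hq.1 ⟨h0, hq.2.1, hq.2.2⟩

lemma sT01 {g : M3 p} (h2 : g 0 2 ≠ 0) :
    (g * miT (g 0 0 / g 0 2) (g 0 1 / g 0 2)) 0 1 = 0 := by
  simp only [miT, mul_apply, Fin.sum_univ_three]
  norm_num [vecHead, vecTail, cons_val_two]
  field_simp
  ring

lemma sT02 {g : M3 p} (h2 : g 0 2 ≠ 0) :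
    (g * miT (g 0 0 / g 0 2) (g 0 1 / g 0 2)) 0 2 = 0 := by
  simp only [miT, mul_apply, Fin.sum_univ_three]
  norm_num [vecHead, vecTail, cons_val_two]
  field_simp
  ring

lemma sS01 {g : M3 p} (h1 : g 0 1 ≠ 0) :
    (g * miS (g 0 0 / g 0 1) (g 0 2 / g 0 1)) 0 1 = 0 := by
  simp only [miS, mul_apply, Fin.sum_univ_three]
  norm_num [vecHead, vecTail, cons_val_two]
  field_simp
  ring

lemma sS02 {g : M3 p} (h1 : g 0 1 ≠ 0) :
    (g * miS (g 0 0 / g 0 1) (g 0 2 / g 0 1)) 0 2 = 0 := by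
  simp only [miS, mul_apply, Fin.sum_univ_three]
  norm_num [vecHead, vecTail, cons_val_two]
  field_simp
  ring

lemma sO01 {g : M3 p} (h0 : g 0 0 ≠ 0) :
    (g * miO (g 0 1 / g 0 0) (g 0 2 / g 0 0)) 0 1 = 0 := by
  simp only [miO, mul_apply, Fin.sum_univ_three]
  norm_num [vecHead, vecTail, cons_val_two]
  field_simp
  ring

lemma sO02 {g : M3 p} (h0 : g 0 0 ≠ 0) :
    (g * miO (g 0 1 / g 0 0) (g 0 2 / g 0 0)) 0 2 = 0 := by
  simp only [miO, mul_apply, Fin.sum_univ_three]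
  norm_num [vecHead, vecTail, cons_val_two]
  field_simp
  ring

lemma main_ex {g : M3 p} (hd : IsUnit g.det) :
    sFun g ∈ P1bar p ∧ wFun g ∈ Wrep p ∧ kFun g ∈ Iw p ∧
    (∃ nu ∈ N1Z p, wFun g * kFun g = nu * wFun g) ∧
    g = sFun g * wFun g * kFun g := by
  by_cases hT : bT g
  · have h2 : g 0 2 ≠ 0 := caseT hd hT
    have hx : ‖g 0 0 / g 0 2‖ ≤ 1 := by
      rw [norm_div]; exact div_le_one_of_le₀ hT.1 (norm_nonneg _)
    have hy : ‖g 0 1 / g 0 2‖ ≤ 1 := by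
      rw [norm_div]; exact div_le_one_of_le₀ hT.2 (norm_nonneg _)
    have hsw : sFun g = g * miT (g 0 0 / g 0 2) (g 0 1 / g 0 2) := by
      rw [sFun, wkInv, if_pos hT]
    have hw : wFun g = wT := by rw [wFun, if_pos hT]
    have hk : kFun g = kT (g 0 0 / g 0 2) (g 0 1 / g 0 2) := by rw [kFun, if_pos hT]
    refine ⟨⟨?_, ?_, ?_⟩, ?_, ?_, ?_, ?_⟩
    · rw [hsw, Matrix.det_mul, det_miT]
      simpa using hd
    · rw [hsw]; exact sT01 h2
    · rw [hsw]; exact sT02 h2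
    · rw [hw]; exact wT_mem_Wrep
    · rw [hk]; exact kT_mem_Iw hx hy
    · exact ⟨mO (g 0 0 / g 0 2) (g 0 1 / g 0 2), mO_mem_N1Z hx hy,
        by rw [hw, hk, wT_kT, mO_wT]⟩
    · rw [hsw, hw, hk, mul_assoc, wT_kT, mul_assoc, miT_mT, mul_one]
  by_cases hS : bS g
  · obtain ⟨h1, hlt⟩ := caseS hT hS
    have hx : ‖g 0 0 / g 0 1‖ ≤ 1 := by
      rw [norm_div]; exact div_le_one_of_le₀ hS (norm_nonneg _)
    have hy : ‖g 0 2 / g 0 1‖ < 1 := by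
      rw [norm_div]; exact (div_lt_one (norm_pos_iff.mpr h1)).mpr hlt
    have hsw : sFun g = g * miS (g 0 0 / g 0 1) (g 0 2 / g 0 1) := by
      rw [sFun, wkInv, if_neg hT, if_pos hS]
    have hw : wFun g = wS := by rw [wFun, if_neg hT, if_pos hS]
    have hk : kFun g = kS (g 0 0 / g 0 1) (g 0 2 / g 0 1) := by
      rw [kFun, if_neg hT, if_pos hS]
    refine ⟨⟨?_, ?_, ?_⟩, ?_, ?_, ?_, ?_⟩
    · rw [hsw, Matrix.det_mul, det_miS]
      exact hd.mul (IsUnit.neg isUnit_one)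
    · rw [hsw]; exact sS01 h1
    · rw [hsw]; exact sS02 h1
    · rw [hw]; exact wS_mem_Wrep
    · rw [hk]; exact kS_mem_Iw hx hy
    · exact ⟨mO (g 0 0 / g 0 1) (g 0 2 / g 0 1), mO_mem_N1Z hx (le_of_lt hy),
        by rw [hw, hk, wS_kS, mO_wS]⟩
    · rw [hsw, hw, hk, mul_assoc, wS_kS, mul_assoc, miS_mS, mul_one]
  · obtain ⟨h0, hlt1, hlt2⟩ := caseO hT hS
    have hx : ‖g 0 1 / g 0 0‖ < 1 := by
      rw [norm_div]; exact (div_lt_one (norm_pos_iff.mpr h0)).mpr hlt1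
    have hy : ‖g 0 2 / g 0 0‖ < 1 := by
      rw [norm_div]; exact (div_lt_one (norm_pos_iff.mpr h0)).mpr hlt2
    have hsw : sFun g = g * miO (g 0 1 / g 0 0) (g 0 2 / g 0 0) := by
      rw [sFun, wkInv, if_neg hT, if_neg hS]
    have hw : wFun g = 1 := by rw [wFun, if_neg hT, if_neg hS]
    have hk : kFun g = mO (g 0 1 / g 0 0) (g 0 2 / g 0 0) := by
      rw [kFun, if_neg hT, if_neg hS]
    refine ⟨⟨?_, ?_, ?_⟩, ?_, ?_, ?_, ?_⟩
    · rw [hsw, Matrix.det_mul, det_miO]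
      simpa using hd
    · rw [hsw]; exact sO01 h0
    · rw [hsw]; exact sO02 h0
    · rw [hw]; exact one_mem_Wrep
    · rw [hk]; exact mO_mem_Iw hx hy
    · exact ⟨mO (g 0 1 / g 0 0) (g 0 2 / g 0 0),
        mO_mem_N1Z (le_of_lt hx) (le_of_lt hy), by rw [hw, hk, one_mul, mul_one]⟩
    · rw [hsw, hw, hk, mul_one, mul_assoc, miO_mO, mul_one]

lemma main_uniq {g : M3 p} (hd : IsUnit g.det) {P W K : M3 p}
    (hP : P ∈ P1bar p) (hW : W ∈ Wrep p) (hK : K ∈ Iw p)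
    (hnu : ∃ nu ∈ N1Z p, W * K = nu * W)
    (hg : g = P * W * K) :
    P = sFun g ∧ W = wFun g ∧ K = kFun g := by
  obtain ⟨nu, ⟨x, y, hx, hy, rfl⟩, hnu⟩ := hnu
  have hnu' : W * K = mO x y * W := hnu
  have ha : P 0 0 ≠ 0 := P00_ne hP
  have hapos : (0:ℝ) < ‖P 0 0‖ := norm_pos_iff.mpr ha
  have hrow : ∀ M : M3 p, ∀ j, (P * M) 0 j = P 0 0 * M 0 j :=
    row0_mul hP.2.1 hP.2.2
  simp only [Wrep, Set.mem_insert_iff, Set.mem_singleton_iff] at hW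
  rcases hW with rfl | rfl | rfl
  · -- W = 1
    have hKeq : K = mO x y := by
      have := hnu'
      rwa [one_mul, mul_one] at this
    subst hKeq
    have hx1 : ‖x‖ < 1 := by simpa [mO, vecHead, vecTail] using hK.2.2.1
    have hy1 : ‖y‖ < 1 := by simpa [mO, vecHead, vecTail] using hK.2.2.2.1
    have hg' : g = P * mO x y := by rw [hg, mul_one]
    have e0 : g 0 0 = P 0 0 := by rw [hg', hrow]; simp [mO, vecHead, vecTail]
    have e1 : g 0 1 = P 0 0 * x := by rw [hg', hrow]; simp [mO, vecHead, vecTail]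
    have e2 : g 0 2 = P 0 0 * y := by rw [hg', hrow]; simp [mO, vecHead, vecTail]
    obtain ⟨hbT, hbS⟩ : ¬ bT g ∧ ¬ bS g := by
      apply toO
      · rw [e0, e1, norm_mul]
        exact mul_lt_of_lt_one_right hapos hx1
      · rw [e0, e2, norm_mul]
        exact mul_lt_of_lt_one_right hapos hy1
    have rx : g 0 1 / g 0 0 = x := by rw [e0, e1, mul_div_cancel_left₀ _ ha]
    have ry : g 0 2 / g 0 0 = y := by rw [e0, e2, mul_div_cancel_left₀ _ ha]
    refine ⟨?_, ?_, ?_⟩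
    · rw [sFun, wkInv, if_neg hbT, if_neg hbS, rx, ry, hg', mul_assoc, mO_miO, mul_one]
    · rw [wFun, if_neg hbT, if_neg hbS]
    · rw [kFun, if_neg hbT, if_neg hbS, rx, ry]
  · -- W = wS
    have hnu2 : wS * K = mO x y * wS := hnu'
    have hgw : g = P * wS * K := hg
    have hKeq : K = kS x y := by
      have h : wS * (wS * K) = wS * (mO x y * wS) := by rw [hnu2]
      rwa [← mul_assoc, wS_wS, one_mul, mO_wS, wS_mS] at h
    subst hKeq
    have hx1 : ‖x‖ ≤ 1 := by simpa [kS, vecHead, vecTail] using hK.1 1 0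
    have hy1 : ‖y‖ < 1 := by simpa [kS, vecHead, vecTail] using hK.2.2.2.2
    have hg' : g = P * mS x y := by rw [hgw, mul_assoc, wS_kS]
    have e0 : g 0 0 = P 0 0 * x := by rw [hg', hrow]; simp [mS, vecHead, vecTail]
    have e1 : g 0 1 = P 0 0 := by
      rw [hg', hrow]; simp [mS, vecHead, vecTail]
    have e2 : g 0 2 = P 0 0 * y := by rw [hg', hrow]; simp [mS, vecHead, vecTail]
    obtain ⟨hbT, hbS⟩ : ¬ bT g ∧ bS g := by
      apply toS
      · rw [e0, e1, norm_mul]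
        exact mul_le_of_le_one_right (le_of_lt hapos) hx1
      · rw [e1, e2, norm_mul]
        exact mul_lt_of_lt_one_right hapos hy1
    have rx : g 0 0 / g 0 1 = x := by rw [e0, e1, mul_div_cancel_left₀ _ ha]
    have ry : g 0 2 / g 0 1 = y := by rw [e1, e2, mul_div_cancel_left₀ _ ha]
    refine ⟨?_, ?_, ?_⟩
    · rw [sFun, wkInv, if_neg hbT, if_pos hbS, rx, ry, hg', mul_assoc, mS_miS, mul_one]
    · rw [wFun, if_neg hbT, if_pos hbS]; rfl
    · rw [kFun, if_neg hbT, if_pos hbS, rx, ry]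
  · -- W = wT
    have hnu2 : wT * K = mO x y * wT := hnu'
    have hgw : g = P * wT * K := hg
    have hKeq : K = kT x y := by
      have h : wTi * (wT * K) = wTi * (mO x y * wT) := by rw [hnu2]
      rwa [← mul_assoc, wTi_wT, one_mul, mO_wT, wTi_mT] at h
    subst hKeq
    have hx1 : ‖x‖ ≤ 1 := by simpa [kT, vecHead, vecTail] using hK.1 2 0
    have hy1 : ‖y‖ ≤ 1 := by simpa [kT, vecHead, vecTail] using hK.1 2 1
    have hg' : g = P * mT x y := by rw [hgw, mul_assoc, wT_kT]
    have e0 : g 0 0 = P 0 0 * x := by rw [hg', hrow]; simp [mT, vecHead, vecTail]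
    have e1 : g 0 1 = P 0 0 * y := by rw [hg', hrow]; simp [mT, vecHead, vecTail]
    have e2 : g 0 2 = P 0 0 := by rw [hg', hrow]; simp [mT, vecHead, vecTail]
    have hbT : bT g := by
      apply toT
      · rw [e0, e2, norm_mul]
        exact mul_le_of_le_one_right (le_of_lt hapos) hx1
      · rw [e1, e2, norm_mul]
        exact mul_le_of_le_one_right (le_of_lt hapos) hy1
    have rx : g 0 0 / g 0 2 = x := by rw [e0, e2, mul_div_cancel_left₀ _ ha]
    have ry : g 0 1 / g 0 2 = y := by rw [e1, e2, mul_div_cancel_left₀ _ ha]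
    refine ⟨?_, ?_, ?_⟩
    · rw [sFun, wkInv, if_pos hbT, rx, ry, hg', mul_assoc, mT_miT, mul_one]
    · rw [wFun, if_pos hbT]; rfl
    · rw [kFun, if_pos hbT, rx, ry]

lemma sFun_equivariant {q g : M3 p} (hq : q ∈ P1bar p) :
    sFun (q * g) = q * sFun g := by
  have ha : q 0 0 ≠ 0 := P00_ne hq
  have hpos : (0:ℝ) < ‖q 0 0‖ := norm_pos_iff.mpr ha
  have e : ∀ j, (q * g) 0 j = q 0 0 * g 0 j := row0_mul hq.2.1 hq.2.2 g
  have hn : ∀ j, ‖(q * g) 0 j‖ = ‖q 0 0‖ * ‖g 0 j‖ := fun j => by rw [e j, norm_mul]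
  have hbT : bT (q * g) ↔ bT g := by
    unfold bT
    rw [hn 0, hn 1, hn 2, mul_le_mul_iff_right₀ hpos, mul_le_mul_iff_right₀ hpos]
  have hbS : bS (q * g) ↔ bS g := by
    unfold bS
    rw [hn 0, hn 1, mul_le_mul_iff_right₀ hpos]
  have hr : ∀ j k : Fin 3, (q * g) 0 j / (q * g) 0 k = g 0 j / g 0 k := fun j k => by
    rw [e j, e k, mul_div_mul_left _ _ ha]
  have hwk : wkInv (q * g) = wkInv g := by
    unfold wkInv
    by_cases hT : bT g
    · rw [if_pos (hbT.mpr hT), if_pos hT, hr 0 2, hr 1 2]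
    · by_cases hS : bS g
      · rw [if_neg (fun h => hT (hbT.mp h)), if_neg hT, if_pos (hbS.mpr hS), if_pos hS,
          hr 0 1, hr 2 1]
      · rw [if_neg (fun h => hT (hbT.mp h)), if_neg hT, if_neg (fun h => hS (hbS.mp h)),
          if_neg hS, hr 1 0, hr 2 0]
  rw [sFun, sFun, hwk, mul_assoc]

lemma isOpen_le_pair : IsOpen {x : ℚ_[p] × ℚ_[p] | ‖x.1‖ ≤ ‖x.2‖ ∧ x.2 ≠ 0} := by
  have h1 : IsOpen {x : ℚ_[p] × ℚ_[p] | x.2 ≠ 0} := isOpen_ne.preimage continuous_snd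
  have hc : ContinuousOn (fun x : ℚ_[p] × ℚ_[p] => x.1 / x.2) {x | x.2 ≠ 0} :=
    ContinuousOn.div continuous_fst.continuousOn continuous_snd.continuousOn
      (fun x hx => hx)
  have hB : IsOpen {c : ℚ_[p] | ‖c‖ ≤ 1} := by
    have hset : {c : ℚ_[p] | ‖c‖ ≤ 1} = {c : ℚ_[p] | ‖c‖ < (p : ℝ)} := by
      ext c
      simp only [Set.mem_setOf_eq]
      have := Padic.norm_le_pow_iff_norm_lt_pow_add_one c 0
      simpa using this
    rw [hset]
    exact isOpen_lt continuous_norm continuous_const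
  have hset : {x : ℚ_[p] × ℚ_[p] | ‖x.1‖ ≤ ‖x.2‖ ∧ x.2 ≠ 0} =
      {x : ℚ_[p] × ℚ_[p] | x.2 ≠ 0} ∩
        (fun x : ℚ_[p] × ℚ_[p] => x.1 / x.2) ⁻¹' {c | ‖c‖ ≤ 1} := by
    ext x
    simp only [Set.mem_setOf_eq, Set.mem_inter_iff, Set.mem_preimage]
    constructor
    · rintro ⟨hle, h2⟩
      exact ⟨h2, by rw [norm_div]; exact div_le_one_of_le₀ hle (norm_nonneg _)⟩
    · rintro ⟨h2, hle⟩
      rw [norm_div, div_le_one (norm_pos_iff.mpr h2)] at hle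
      exact ⟨hle, h2⟩
  rw [hset]
  exact hc.isOpen_inter_preimage h1 hB

lemma isOpen_lt_pair : IsOpen {x : ℚ_[p] × ℚ_[p] | ‖x.1‖ < ‖x.2‖} := by
  have h1 : IsOpen {x : ℚ_[p] × ℚ_[p] | x.2 ≠ 0} := isOpen_ne.preimage continuous_snd
  have hc : ContinuousOn (fun x : ℚ_[p] × ℚ_[p] => x.1 / x.2) {x | x.2 ≠ 0} :=
    ContinuousOn.div continuous_fst.continuousOn continuous_snd.continuousOn
      (fun x hx => hx)
  have hB : IsOpen {c : ℚ_[p] | ‖c‖ < 1} := isOpen_lt continuous_norm continuous_const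
  have hset : {x : ℚ_[p] × ℚ_[p] | ‖x.1‖ < ‖x.2‖} =
      {x : ℚ_[p] × ℚ_[p] | x.2 ≠ 0} ∩
        (fun x : ℚ_[p] × ℚ_[p] => x.1 / x.2) ⁻¹' {c | ‖c‖ < 1} := by
    ext x
    simp only [Set.mem_setOf_eq, Set.mem_inter_iff, Set.mem_preimage]
    constructor
    · intro hlt
      have h2 : x.2 ≠ 0 := by
        intro h
        rw [h, norm_zero] at hlt
        exact absurd hlt (norm_nonneg _).not_gt
      exact ⟨h2, by rw [norm_div]; exact (div_lt_one (norm_pos_iff.mpr h2)).mpr hlt⟩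
    · rintro ⟨h2, hlt⟩
      rw [norm_div, div_lt_one (norm_pos_iff.mpr h2)] at hlt
      exact hlt
  rw [hset]
  exact hc.isOpen_inter_preimage h1 hB

lemma continuousOn_mat {X : Type*} [TopologicalSpace X] {f : X → M3 p} {s : Set X}
    (h : ∀ i j, ContinuousOn (fun x => f x i j) s) : ContinuousOn f s := by
  intro x hx
  exact continuousWithinAt_pi.mpr fun i => continuousWithinAt_pi.mpr fun j => h i j x hx

lemma elem_cont (i j : Fin 3) : Continuous fun g : M3 p => g i j :=
  continuous_id.matrix_elem i j

lemma contOn_div (i j : Fin 3) :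
    ContinuousOn (fun g : M3 p => g 0 i / g 0 j) {g : M3 p | g 0 j ≠ 0} :=
  ContinuousOn.div (elem_cont 0 i).continuousOn (elem_cont 0 j).continuousOn
    (fun g hg => hg)

lemma contOn_FT :
    ContinuousOn (fun g : M3 p => g * miT (g 0 0 / g 0 2) (g 0 1 / g 0 2))
      {g : M3 p | g 0 2 ≠ 0} := by
  refine ContinuousOn.mul (continuous_id.continuousOn) (continuousOn_mat fun i j => ?_)
  fin_cases i <;> fin_cases j <;>
    simp only [miT, cons_val', cons_val_zero, cons_val_one, head_cons, empty_val',
      cons_val_fin_one, head_fin_const, cons_val_two, tail_cons] <;>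
    first
      | exact continuousOn_const
      | exact (contOn_div 0 2).neg
      | exact (contOn_div 1 2).neg

lemma contOn_FS :
    ContinuousOn (fun g : M3 p => g * miS (g 0 0 / g 0 1) (g 0 2 / g 0 1))
      {g : M3 p | g 0 1 ≠ 0} := by
  refine ContinuousOn.mul (continuous_id.continuousOn) (continuousOn_mat fun i j => ?_)
  fin_cases i <;> fin_cases j <;>
    simp only [miS, cons_val', cons_val_zero, cons_val_one, head_cons, empty_val',
      cons_val_fin_one, head_fin_const, cons_val_two, tail_cons] <;>
    first
      | exact continuousOn_const
      | exact (contOn_div 0 1).neg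
      | exact (contOn_div 2 1).neg

lemma contOn_FO :
    ContinuousOn (fun g : M3 p => g * miO (g 0 1 / g 0 0) (g 0 2 / g 0 0))
      {g : M3 p | g 0 0 ≠ 0} := by
  refine ContinuousOn.mul (continuous_id.continuousOn) (continuousOn_mat fun i j => ?_)
  fin_cases i <;> fin_cases j <;>
    simp only [miO, cons_val', cons_val_zero, cons_val_one, head_cons, empty_val',
      cons_val_fin_one, head_fin_const, cons_val_two, tail_cons] <;>
    first
      | exact continuousOn_const
      | exact (contOn_div 1 0).neg
      | exact (contOn_div 2 0).neg

lemma sFun_continuousOn : ContinuousOn (sFun : M3 p → M3 p) {g : M3 p | IsUnit g.det} := by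
  intro g hg
  apply ContinuousAt.continuousWithinAt
  have hg' : IsUnit g.det := hg
  by_cases hT : bT g
  · have h2 : g 0 2 ≠ 0 := caseT hg' hT
    have hUopen : IsOpen
        ((fun g : M3 p => (g 0 0, g 0 2)) ⁻¹' {x | ‖x.1‖ ≤ ‖x.2‖ ∧ x.2 ≠ 0} ∩
         (fun g : M3 p => (g 0 1, g 0 2)) ⁻¹' {x | ‖x.1‖ ≤ ‖x.2‖ ∧ x.2 ≠ 0}) :=
      (isOpen_le_pair.preimage ((elem_cont 0 0).prodMk (elem_cont 0 2))).inter
        (isOpen_le_pair.preimage ((elem_cont 0 1).prodMk (elem_cont 0 2)))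
    have hgU : g ∈ (fun g : M3 p => (g 0 0, g 0 2)) ⁻¹' {x | ‖x.1‖ ≤ ‖x.2‖ ∧ x.2 ≠ 0} ∩
        (fun g : M3 p => (g 0 1, g 0 2)) ⁻¹' {x | ‖x.1‖ ≤ ‖x.2‖ ∧ x.2 ≠ 0} :=
      ⟨⟨hT.1, h2⟩, ⟨hT.2, h2⟩⟩
    have hVopen : IsOpen {h : M3 p | h 0 2 ≠ 0} := isOpen_ne.preimage (elem_cont 0 2)
    have hFT : ContinuousAt
        (fun g : M3 p => g * miT (g 0 0 / g 0 2) (g 0 1 / g 0 2)) g :=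
      contOn_FT.continuousAt (hVopen.mem_nhds h2)
    apply hFT.congr
    filter_upwards [hUopen.mem_nhds hgU] with h hh
    rw [sFun, wkInv, if_pos (toT hh.1.1 hh.2.1)]
  by_cases hS : bS g
  · obtain ⟨h1, hlt⟩ := caseS hT hS
    have hUopen : IsOpen
        ((fun g : M3 p => (g 0 0, g 0 1)) ⁻¹' {x | ‖x.1‖ ≤ ‖x.2‖ ∧ x.2 ≠ 0} ∩
         (fun g : M3 p => (g 0 2, g 0 1)) ⁻¹' {x | ‖x.1‖ < ‖x.2‖}) :=
      (isOpen_le_pair.preimage ((elem_cont 0 0).prodMk (elem_cont 0 1))).inter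
        (isOpen_lt_pair.preimage ((elem_cont 0 2).prodMk (elem_cont 0 1)))
    have hgU : g ∈ (fun g : M3 p => (g 0 0, g 0 1)) ⁻¹' {x | ‖x.1‖ ≤ ‖x.2‖ ∧ x.2 ≠ 0} ∩
        (fun g : M3 p => (g 0 2, g 0 1)) ⁻¹' {x | ‖x.1‖ < ‖x.2‖} :=
      ⟨⟨hS, h1⟩, hlt⟩
    have hVopen : IsOpen {h : M3 p | h 0 1 ≠ 0} := isOpen_ne.preimage (elem_cont 0 1)
    have hFS : ContinuousAt
        (fun g : M3 p => g * miS (g 0 0 / g 0 1) (g 0 2 / g 0 1)) g :=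
      contOn_FS.continuousAt (hVopen.mem_nhds h1)
    apply hFS.congr
    filter_upwards [hUopen.mem_nhds hgU] with h hh
    obtain ⟨hbT, hbS⟩ := toS hh.1.1 hh.2
    rw [sFun, wkInv, if_neg hbT, if_pos hbS]
  · obtain ⟨h0, hlt1, hlt2⟩ := caseO hT hS
    have hUopen : IsOpen
        ((fun g : M3 p => (g 0 1, g 0 0)) ⁻¹' {x | ‖x.1‖ < ‖x.2‖} ∩
         (fun g : M3 p => (g 0 2, g 0 0)) ⁻¹' {x | ‖x.1‖ < ‖x.2‖}) :=
      (isOpen_lt_pair.preimage ((elem_cont 0 1).prodMk (elem_cont 0 0))).inter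
        (isOpen_lt_pair.preimage ((elem_cont 0 2).prodMk (elem_cont 0 0)))
    have hgU : g ∈ (fun g : M3 p => (g 0 1, g 0 0)) ⁻¹' {x | ‖x.1‖ < ‖x.2‖} ∩
        (fun g : M3 p => (g 0 2, g 0 0)) ⁻¹' {x | ‖x.1‖ < ‖x.2‖} :=
      ⟨hlt1, hlt2⟩
    have hVopen : IsOpen {h : M3 p | h 0 0 ≠ 0} := isOpen_ne.preimage (elem_cont 0 0)
    have hFO : ContinuousAt
        (fun g : M3 p => g * miO (g 0 1 / g 0 0) (g 0 2 / g 0 0)) g :=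
      contOn_FO.continuousAt (hVopen.mem_nhds h0)
    apply hFO.congr
    filter_upwards [hUopen.mem_nhds hgU] with h hh
    obtain ⟨hbT, hbS⟩ := toO hh.1 hh.2
    rw [sFun, wkInv, if_neg hbT, if_neg hbS]

end S0

/-- Every `g ∈ GL₃(ℚ_p)` can be written uniquely as `g = p̄ · w · k` with
`p̄ ∈ P̄₁(ℚ_p)`, `w ∈ {I₃, σ, τ}` and `k ∈ Iw ∩ w⁻¹ N₁(ℤ_p) w`; consequently the
map `s : g ↦ p̄` is well-defined, continuous and left `P̄₁(ℚ_p)`-equivariant. -/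
theorem statement0 (p : ℕ) [Fact p.Prime] :
    (∀ g : M3 p, IsUnit g.det →
      ∃! d : M3 p × M3 p × M3 p,
        d.1 ∈ P1bar p ∧ d.2.1 ∈ Wrep p ∧ d.2.2 ∈ Iw p ∧
        (∃ nu ∈ N1Z p, d.2.1 * d.2.2 = nu * d.2.1) ∧
        g = d.1 * d.2.1 * d.2.2) ∧
    (∃ s : M3 p → M3 p,
      ContinuousOn s {g : M3 p | IsUnit g.det} ∧
      (∀ g : M3 p, IsUnit g.det →
        s g ∈ P1bar p ∧
        ∃ w ∈ Wrep p, ∃ k ∈ Iw p,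
          (∃ nu ∈ N1Z p, w * k = nu * w) ∧ g = s g * w * k) ∧
      (∀ q ∈ P1bar p, ∀ g : M3 p, IsUnit g.det → s (q * g) = q * s g)) := by
  constructor
  · intro g hd
    obtain ⟨h1, h2, h3, h4, h5⟩ := S0.main_ex hd
    refine ⟨(S0.sFun g, S0.wFun g, S0.kFun g), ⟨h1, h2, h3, h4, h5⟩, ?_⟩
    rintro ⟨P, W, K⟩ ⟨hP, hW, hK, hnu, hg⟩
    obtain ⟨e1, e2, e3⟩ := S0.main_uniq hd hP hW hK hnu hg
    simp only [Prod.mk.injEq]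
    exact ⟨e1, e2, e3⟩
  · refine ⟨S0.sFun, S0.sFun_continuousOn, fun g hd => ?_,
      fun q hq g _ => S0.sFun_equivariant hq⟩
    obtain ⟨h1, h2, h3, h4, h5⟩ := S0.main_ex hd
    exact ⟨h1, S0.wFun g, h2, S0.kFun g, h3, h4, h5⟩
end
end

section
/- GL₂(ℚ_p) is the disjoint union of the two sets B̄₂(ℚ_p)·w'·{[[1,0],[z,1]] : z ∈ ℤ_p} and B̄₂(ℚ_p)·{[[1,u],[0,1]] : u ∈ pℤ_p}, where w' = [[0,1],[−1,0]]. -/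
open Matrix

noncomputable section

/-- The ring of `2 × 2` matrices over `ℚ_p`. -/
abbrev M2 (p : ℕ) [Fact p.Prime] := Matrix (Fin 2) (Fin 2) ℚ_[p]

/-- The cell `B̄₂(ℚ_p) · w' · {[[1,0],[z,1]] : z ∈ ℤ_p}`, where `w' = [[0,1],[−1,0]]`
and `B̄₂(ℚ_p)` is the group of invertible lower-triangular matrices. -/
def cellOne (p : ℕ) [Fact p.Prime] : Set (M2 p) :=
  {g | ∃ b : M2 p, IsUnit b.det ∧ b 0 1 = 0 ∧
    ∃ z : ℚ_[p], ‖z‖ ≤ 1 ∧ g = b * !![0, 1; -1, 0] * !![1, 0; z, 1]}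

/-- The cell `B̄₂(ℚ_p) · {[[1,u],[0,1]] : u ∈ pℤ_p}`. -/
def cellTwo (p : ℕ) [Fact p.Prime] : Set (M2 p) :=
  {g | ∃ b : M2 p, IsUnit b.det ∧ b 0 1 = 0 ∧
    ∃ u : ℚ_[p], ‖u‖ < 1 ∧ g = b * !![1, u; 0, 1]}

lemma mem_cellOne_iff {p : ℕ} [Fact p.Prime] (g : M2 p) :
    g ∈ cellOne p ↔ IsUnit g.det ∧ ‖g 0 0‖ ≤ ‖g 0 1‖ := by
  constructor
  · rintro ⟨b, hb, hb01, z, hz, rfl⟩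
    have hb00 : b 0 0 ≠ 0 := by
      intro h
      rw [Matrix.det_fin_two, h, hb01] at hb
      simp at hb
    constructor
    · simpa [Matrix.det_mul, Matrix.det_fin_two_of, isUnit_iff_ne_zero] using hb
    · have h00 : ((b * !![0, 1; -1, 0] * !![1, 0; z, 1] : M2 p)) 0 0 = b 0 0 * z := by
        simp [Matrix.mul_apply, Fin.sum_univ_two, hb01]
      have h01 : ((b * !![0, 1; -1, 0] * !![1, 0; z, 1] : M2 p)) 0 1 = b 0 0 := by
        simp [Matrix.mul_apply, Fin.sum_univ_two, hb01]
      rw [h00, h01, norm_mul]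
      calc ‖b 0 0‖ * ‖z‖ ≤ ‖b 0 0‖ * 1 := by
            exact mul_le_mul_of_nonneg_left hz (norm_nonneg _)
        _ = ‖b 0 0‖ := mul_one _
  · rintro ⟨hg, hle⟩
    have hg01 : g 0 1 ≠ 0 := by
      intro h
      have h00 : g 0 0 = 0 := by
        rw [h] at hle; simpa using hle
      rw [Matrix.det_fin_two, h, h00] at hg
      simp at hg
    refine ⟨!![g 0 1, 0; g 1 1, g 1 1 * (g 0 0 / g 0 1) - g 1 0],
      ?_, by simp, g 0 0 / g 0 1, ?_, ?_⟩
    · have : (!![g 0 1, 0; g 1 1, g 1 1 * (g 0 0 / g 0 1) - g 1 0] : M2 p).det = g.det := by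
        rw [Matrix.det_fin_two_of, Matrix.det_fin_two]
        field_simp
        ring
      rw [this]; exact hg
    · rw [norm_div]
      exact div_le_one_of_le₀ hle (norm_nonneg _)
    · ext i j
      fin_cases i <;> fin_cases j <;>
        simp [Matrix.mul_apply, Fin.sum_univ_two] <;> field_simp <;> ring

lemma mem_cellTwo_iff {p : ℕ} [Fact p.Prime] (g : M2 p) :
    g ∈ cellTwo p ↔ IsUnit g.det ∧ ‖g 0 1‖ < ‖g 0 0‖ := by
  constructor
  · rintro ⟨b, hb, hb01, u, hu, rfl⟩
    have hb00 : b 0 0 ≠ 0 := by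
      intro h
      rw [Matrix.det_fin_two, h, hb01] at hb
      simp at hb
    constructor
    · simpa [Matrix.det_mul, Matrix.det_fin_two_of, isUnit_iff_ne_zero] using hb
    · have h00 : ((b * !![1, u; 0, 1] : M2 p)) 0 0 = b 0 0 := by
        simp [Matrix.mul_apply, Fin.sum_univ_two, hb01]
      have h01 : ((b * !![1, u; 0, 1] : M2 p)) 0 1 = b 0 0 * u := by
        simp [Matrix.mul_apply, Fin.sum_univ_two, hb01]
      rw [h00, h01, norm_mul]
      have : ‖b 0 0‖ > 0 := norm_pos_iff.mpr hb00
      calc ‖b 0 0‖ * ‖u‖ < ‖b 0 0‖ * 1 := by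
            exact mul_lt_mul_of_pos_left hu this
        _ = ‖b 0 0‖ := mul_one _
  · rintro ⟨hg, hlt⟩
    have hg00 : g 0 0 ≠ 0 := by
      intro h
      rw [h] at hlt
      simp at hlt
      exact absurd hlt (norm_nonneg _).not_gt
    refine ⟨!![g 0 0, 0; g 1 0, g 1 1 - g 1 0 * (g 0 1 / g 0 0)],
      ?_, by simp, g 0 1 / g 0 0, ?_, ?_⟩
    · have : (!![g 0 0, 0; g 1 0, g 1 1 - g 1 0 * (g 0 1 / g 0 0)] : M2 p).det = g.det := by
        rw [Matrix.det_fin_two_of, Matrix.det_fin_two]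
        field_simp
        ring
      rw [this]; exact hg
    · rw [norm_div]
      exact (div_lt_one (norm_pos_iff.mpr hg00)).mpr hlt
    · ext i j
      fin_cases i <;> fin_cases j <;>
        simp [Matrix.mul_apply, Fin.sum_univ_two] <;> field_simp <;> ring

/-- `GL₂(ℚ_p)` is the disjoint union of the two cells
`B̄₂(ℚ_p)·w'·{[[1,0],[z,1]] : z ∈ ℤ_p}` and `B̄₂(ℚ_p)·{[[1,u],[0,1]] : u ∈ pℤ_p}`. -/
theorem statement2 (p : ℕ) [Fact p.Prime] :
    {g : M2 p | IsUnit g.det} = cellOne p ∪ cellTwo p ∧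
    Disjoint (cellOne p) (cellTwo p) := by
  constructor
  · ext g
    simp only [Set.mem_setOf_eq, Set.mem_union, mem_cellOne_iff, mem_cellTwo_iff]
    constructor
    · intro h
      rcases le_or_gt ‖g 0 0‖ ‖g 0 1‖ with h' | h'
      · exact Or.inl ⟨h, h'⟩
      · exact Or.inr ⟨h, h'⟩
    · rintro (⟨h, _⟩ | ⟨h, _⟩) <;> exact h
  · rw [Set.disjoint_left]
    intro g h1 h2
    rw [mem_cellOne_iff] at h1
    rw [mem_cellTwo_iff] at h2
    exact absurd h1.2 h2.2.not_ge
end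
end

section
/- Let 𝒜, ℬ ⊆ ℤ_p be subsets and u₀ = [[1,0,0],[0,0,−1],[0,1,0]]. Then the set P̄₁(ℚ_p)·{[[1,x,y],[0,1,0],[0,0,1]] : x ∈ 𝒜, y ∈ ℬ} is equal to the disjoint union of B̄(ℚ_p)·u₀⁻¹·{[[1,x,y],[0,1,0],[0,z,1]] : x ∈ 𝒜, y ∈ ℬ, z ∈ ℤ_p} and B̄(ℚ_p)·{[[1,x,y],[0,1,w],[0,0,1]] : x ∈ 𝒜, y ∈ ℬ, w ∈ pℤ_p}. -/
open Matrix

noncomputable section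

/-- `B̄(ℚ_p)`, the invertible lower-triangular `3 × 3` matrices over `ℚ_p`. -/
def Bbar (p : ℕ) [Fact p.Prime] : Set (M3 p) :=
  {g | IsUnit g.det ∧ g 0 1 = 0 ∧ g 0 2 = 0 ∧ g 1 2 = 0}

/-- The matrix `u₀ = [[1,0,0],[0,0,−1],[0,1,0]]`. -/
def u0 (p : ℕ) [Fact p.Prime] : M3 p := !![1, 0, 0; 0, 0, -1; 0, 1, 0]

/-- The set `P̄₁(ℚ_p)·{[[1,x,y],[0,1,0],[0,0,1]] : x ∈ 𝒜, y ∈ ℬ}`. -/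
def cellP1 (p : ℕ) [Fact p.Prime] (A B : Set ℚ_[p]) : Set (M3 p) :=
  {g | ∃ q ∈ P1bar p, ∃ x ∈ A, ∃ y ∈ B, g = q * !![1, x, y; 0, 1, 0; 0, 0, 1]}

/-- The set `B̄(ℚ_p)·u₀⁻¹·{[[1,x,y],[0,1,0],[0,z,1]] : x ∈ 𝒜, y ∈ ℬ, z ∈ ℤ_p}`. -/
def cellA (p : ℕ) [Fact p.Prime] (A B : Set ℚ_[p]) : Set (M3 p) :=
  {g | ∃ b ∈ Bbar p, ∃ x ∈ A, ∃ y ∈ B, ∃ z : ℚ_[p], ‖z‖ ≤ 1 ∧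
    g = b * (u0 p)⁻¹ * !![1, x, y; 0, 1, 0; 0, z, 1]}

/-- The set `B̄(ℚ_p)·{[[1,x,y],[0,1,w],[0,0,1]] : x ∈ 𝒜, y ∈ ℬ, w ∈ pℤ_p}`. -/
def cellB (p : ℕ) [Fact p.Prime] (A B : Set ℚ_[p]) : Set (M3 p) :=
  {g | ∃ b ∈ Bbar p, ∃ x ∈ A, ∃ y ∈ B, ∃ w : ℚ_[p], ‖w‖ < 1 ∧
    g = b * !![1, x, y; 0, 1, w; 0, 0, 1]}

section Aux
variable {p : ℕ} [Fact p.Prime]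

lemma hu0' : (!![1, 0, 0; 0, 0, -1; 0, 1, 0] : Matrix (Fin 3) (Fin 3) ℚ_[p])⁻¹ = !![1,0,0;0,0,1;0,-1,0] := by
  apply Matrix.inv_eq_right_inv
  rw [Matrix.one_fin_three]
  norm_num [Matrix.mul_fin_three]

lemma prodP' (a b c d e f h x y : ℚ_[p]) :
    !![a,0,0;b,c,d;e,f,h] * !![1,x,y;0,1,0;0,0,1]
    = !![a, a*x, a*y; b, b*x+c, b*y+d; e, e*x+f, e*y+h] := by
  rw [Matrix.mul_fin_three]; ext i j; fin_cases i <;> fin_cases j <;> simp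

lemma prodA' (b0 b1 b2 b3 b4 b5 x y z : ℚ_[p]) :
    !![b0,0,0;b1,b2,0;b3,b4,b5] * (!![1, 0, 0; 0, 0, -1; 0, 1, 0] : Matrix (Fin 3) (Fin 3) ℚ_[p])⁻¹ * !![1,x,y;0,1,0;0,z,1]
    = !![b0, b0*x, b0*y; b1, b1*x+b2*z, b1*y+b2; b3, b3*x+b4*z-b5, b3*y+b4] := by
  rw [hu0', Matrix.mul_fin_three, Matrix.mul_fin_three]
  ext i j; fin_cases i <;> fin_cases j <;> simp <;> ring

lemma prodB' (b0 b1 b2 b3 b4 b5 x y w : ℚ_[p]) :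
    !![b0,0,0;b1,b2,0;b3,b4,b5] * !![1,x,y;0,1,w;0,0,1]
    = !![b0, b0*x, b0*y; b1, b1*x+b2, b1*y+b2*w; b3, b3*x+b4, b3*y+b4*w+b5] := by
  rw [Matrix.mul_fin_three]
  ext i j; fin_cases i <;> fin_cases j <;> simp <;> ring


end Aux

/-- For subsets `𝒜, ℬ ⊆ ℤ_p`, the set `P̄₁(ℚ_p)·{[[1,x,y],[0,1,0],[0,0,1]] : x ∈ 𝒜, y ∈ ℬ}`
is the disjoint union of `B̄(ℚ_p)·u₀⁻¹·{[[1,x,y],[0,1,0],[0,z,1]] : x ∈ 𝒜, y ∈ ℬ, z ∈ ℤ_p}`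
and `B̄(ℚ_p)·{[[1,x,y],[0,1,w],[0,0,1]] : x ∈ 𝒜, y ∈ ℬ, w ∈ pℤ_p}`. -/
theorem statement3 (p : ℕ) [Fact p.Prime] (A B : Set ℚ_[p])
    (hA : ∀ x ∈ A, ‖x‖ ≤ 1) (hB : ∀ y ∈ B, ‖y‖ ≤ 1) :
    cellP1 p A B = cellA p A B ∪ cellB p A B ∧
    Disjoint (cellA p A B) (cellB p A B) := by
  constructor
  · ext g
    simp only [cellP1, cellA, cellB, P1bar, Bbar, u0, Set.mem_setOf_eq, Set.mem_union]
    constructor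
    · rintro ⟨q, ⟨hdet, h01, h02⟩, x, hx, y, hy, rfl⟩
      have hqe := Matrix.eta_fin_three q
      rw [h01, h02] at hqe
      set a := q 0 0 with ha'; set b := q 1 0; set c := q 1 1; set d := q 1 2
      set e := q 2 0; set f := q 2 1; set h := q 2 2
      have hdetq : q.det = a * (c * h - d * f) := by
        rw [Matrix.det_fin_three, h01, h02]; ring
      rw [hdetq, isUnit_iff_ne_zero] at hdet
      have ha : a ≠ 0 := fun h' => hdet (by rw [h']; ring)
      have hch : c * h - d * f ≠ 0 := by
        intro h'; exact hdet (by rw [h']; ring)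
      by_cases hcd : ‖c‖ ≤ ‖d‖
      · left
        have hd : d ≠ 0 := by
          intro h'
          rw [h', norm_zero] at hcd
          have hc : c = 0 := norm_le_zero_iff.mp hcd
          exact hch (by rw [hc, h']; ring)
        refine ⟨!![a,0,0;b,d,0;e,h,(h*c-f*d)/d], ⟨?_, by norm_num, by rfl, by rfl⟩,
          x, hx, y, hy, c/d, ?_, ?_⟩
        · rw [isUnit_iff_ne_zero]
          have : Matrix.det !![a,0,0;b,d,0;e,h,(h*c-f*d)/d] = a * (c*h - d*f) := by
            simp [Matrix.det_fin_three]
            field_simp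
          rw [this]; exact hdet
        · rw [norm_div]
          exact div_le_one_of_le₀ hcd (norm_nonneg _)
        · rw [hqe, prodP', prodA']
          ext i j
          fin_cases i <;> fin_cases j <;> simp <;> field_simp <;> ring
      · right
        push_neg at hcd
        have hc : c ≠ 0 := by
          intro h'; rw [h', norm_zero] at hcd
          exact (norm_nonneg d).not_gt hcd
        refine ⟨!![a,0,0;b,c,0;e,f,h - f*(d/c)], ⟨?_, by norm_num, by rfl, by rfl⟩,
          x, hx, y, hy, d/c, ?_, ?_⟩
        · rw [isUnit_iff_ne_zero]
          have : Matrix.det !![a,0,0;b,c,0;e,f,h - f*(d/c)] = a * (c*h - d*f) := by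
            simp [Matrix.det_fin_three]
            field_simp
          rw [this]; exact hdet
        · rw [norm_div]
          exact (div_lt_one (norm_pos_iff.mpr hc)).mpr hcd
        · rw [hqe, prodP', prodB']
          ext i j
          fin_cases i <;> fin_cases j <;> simp <;> field_simp <;> ring
    · rintro (⟨b, ⟨hdet, h01, h02, h12⟩, x, hx, y, hy, z, hz, rfl⟩ |
              ⟨b, ⟨hdet, h01, h02, h12⟩, x, hx, y, hy, w, hw, rfl⟩)
      · have hbe := Matrix.eta_fin_three b
        rw [h01, h02, h12] at hbe
        set b0 := b 0 0; set b1 := b 1 0; set b2 := b 1 1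
        set b3 := b 2 0; set b4 := b 2 1; set b5 := b 2 2
        have hdetb : b.det = b0 * b2 * b5 := by
          rw [Matrix.det_fin_three, h01, h02, h12]; ring
        rw [hdetb, isUnit_iff_ne_zero] at hdet
        refine ⟨!![b0,0,0;b1,b2*z,b2;b3,b4*z-b5,b4], ⟨?_, by norm_num, by rfl⟩,
          x, hx, y, hy, ?_⟩
        · rw [isUnit_iff_ne_zero]
          have : Matrix.det !![b0,0,0;b1,b2*z,b2;b3,b4*z-b5,b4] = b0*b2*b5 := by
            simp [Matrix.det_fin_three]; ring
          rw [this]; exact hdet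
        · rw [hbe, prodA', prodP']
          ext i j
          fin_cases i <;> fin_cases j <;> simp <;> ring
      · have hbe := Matrix.eta_fin_three b
        rw [h01, h02, h12] at hbe
        set b0 := b 0 0; set b1 := b 1 0; set b2 := b 1 1
        set b3 := b 2 0; set b4 := b 2 1; set b5 := b 2 2
        have hdetb : b.det = b0 * b2 * b5 := by
          rw [Matrix.det_fin_three, h01, h02, h12]; ring
        rw [hdetb, isUnit_iff_ne_zero] at hdet
        refine ⟨!![b0,0,0;b1,b2,b2*w;b3,b4,b4*w+b5], ⟨?_, by norm_num, by rfl⟩,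
          x, hx, y, hy, ?_⟩
        · rw [isUnit_iff_ne_zero]
          have : Matrix.det !![b0,0,0;b1,b2,b2*w;b3,b4,b4*w+b5] = b0*b2*b5 := by
            simp [Matrix.det_fin_three]; ring
          rw [this]; exact hdet
        · rw [hbe, prodB', prodP']
          ext i j
          fin_cases i <;> fin_cases j <;> simp <;> ring
  · rw [Set.disjoint_left]
    rintro g ⟨b, ⟨hdet, h01, h02, h12⟩, x, hx, y, hy, z, hz, rfl⟩
             ⟨b', ⟨hdet', h01', h02', h12'⟩, x', hx', y', hy', w, hw, heq⟩
    have hbe := Matrix.eta_fin_three b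
    rw [h01, h02, h12] at hbe
    have hbe' := Matrix.eta_fin_three b'
    rw [h01', h02', h12'] at hbe'
    set b0 := b 0 0; set b1 := b 1 0; set b2 := b 1 1
    set b3 := b 2 0; set b4 := b 2 1; set b5 := b 2 2
    set c0 := b' 0 0; set c1 := b' 1 0; set c2 := b' 1 1
    set c3 := b' 2 0; set c4 := b' 2 1; set c5 := b' 2 2
    have hdetb : b.det = b0 * b2 * b5 := by
      rw [Matrix.det_fin_three, h01, h02, h12]; ring
    rw [hdetb, isUnit_iff_ne_zero] at hdet
    have hb0 : b0 ≠ 0 := fun h' => hdet (by rw [h']; ring)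
    have hb2 : b2 ≠ 0 := fun h' => hdet (by rw [h']; ring)
    rw [hbe, hbe', u0, prodA', prodB'] at heq
    have e00 := congrFun (congrFun heq 0) 0
    have e01 := congrFun (congrFun heq 0) 1
    have e02 := congrFun (congrFun heq 0) 2
    have e10 := congrFun (congrFun heq 1) 0
    have e11 := congrFun (congrFun heq 1) 1
    have e12 := congrFun (congrFun heq 1) 2
    simp only [Matrix.of_apply, Matrix.cons_val', Matrix.cons_val_zero, Matrix.cons_val_one,
      Matrix.head_cons, Matrix.empty_val', Matrix.cons_val_fin_one, Matrix.cons_val_two,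
      Matrix.tail_cons, Matrix.head_fin_const] at e00 e01 e02 e10 e11 e12
    -- e00 : b0 = c0, e01 : b0*x = c0*x', e02 : b0*y = c0*y'
    -- e10 : b1 = c1, e11 : b1*x+b2*z = c1*x'+c2, e12 : b1*y+b2 = c1*y'+c2*w
    have hx' : x = x' := by
      have := e01; rw [← e00] at this
      exact mul_left_cancel₀ hb0 this
    have hy'' : y = y' := by
      have := e02; rw [← e00] at this
      exact mul_left_cancel₀ hb0 this
    have hc2 : c2 = b2 * z := by
      have := e11; rw [← e10, ← hx'] at this; linear_combination -this
    have hzw : b2 * (z * w) = b2 := by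
      have := e12; rw [← e10, ← hy'', hc2] at this
      linear_combination -this
    have h1 : z * w = 1 := mul_left_cancel₀ hb2 (by rw [hzw, mul_one])
    have : ‖z * w‖ < 1 := by
      rw [norm_mul]
      calc ‖z‖ * ‖w‖ ≤ 1 * ‖w‖ := by
            exact mul_le_mul_of_nonneg_right hz (norm_nonneg w)
        _ = ‖w‖ := one_mul _
        _ < 1 := hw
    rw [h1, norm_one] at this
    exact lt_irrefl _ this
end
end

section
/- Let R be an abelian group, let 𝒜, ℬ ⊆ ℤ_p be subsets with 𝒜 = −𝒜, and let f : ℬ → R be any function. Define functions ψ, φ, ξ : GL₃(ℚ_p) → R as follows: ψ(g) = f(y) if g ∈ B̄(ℚ_p)·[[1,x,y],[0,1,w],[0,0,1]] for some x ∈ 𝒜, y ∈ ℬ, w ∈ pℤ_p, and ψ(g) = 0 otherwise; φ(g) = f(y) if g ∈ B̄(ℚ_p)·[[1,y,x],[0,1,z],[0,0,1]] for some x ∈ 𝒜, y ∈ ℬ, z ∈ ℤ_p, and φ(g) = 0 otherwise; ξ(g) = f(y) if g ∈ P̄₁(ℚ_p)·[[1,x,y],[0,1,0],[0,0,1]] for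 some x ∈ 𝒜, y ∈ ℬ, and ξ(g) = 0 otherwise. Then ψ, φ, ξ are well-defined (the value f(y) does not depend on the chosen representation), and for all g ∈ GL₃(ℚ_p) one has φ(g·u₀) = ξ(g) − ψ(g), where u₀ = [[1,0,0],[0,0,−1],[0,1,0]]. -/
open Matrix

noncomputable section

namespace S4
variable {p : ℕ} [Fact p.Prime]

def X (g : M3 p) : ℚ_[p] := g 0 1 / g 0 0
def Y (g : M3 p) : ℚ_[p] := g 0 2 / g 0 0
def C (g : M3 p) : ℚ_[p] := g 1 1 - g 1 0 * X g
def D (g : M3 p) : ℚ_[p] := g 1 2 - g 1 0 * Y g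
def W (g : M3 p) : ℚ_[p] := D g / C g

lemma repr_lemma {g b : M3 p} (hb : b ∈ Bbar p) (a₁ a₂ a₃ : ℚ_[p])
    (h : g = b * !![1, a₁, a₂; 0, 1, a₃; 0, 0, 1]) :
    IsUnit g.det ∧ g 0 0 ≠ 0 ∧ X g = a₁ ∧ Y g = a₂ ∧ C g ≠ 0 ∧ W g = a₃ := by
  obtain ⟨hdet, h01, h02, h12⟩ := hb
  have hbd : b.det = b 0 0 * b 1 1 * b 2 2 := by
    simp [det_fin_three, h01, h02, h12]
  rw [hbd] at hdet
  have hb0 : b 0 0 ≠ 0 := by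
    intro h'; rw [h'] at hdet; simp at hdet
  have hb1 : b 1 1 ≠ 0 := by
    intro h'; rw [h'] at hdet; simp at hdet
  have e00 : g 0 0 = b 0 0 := by rw [h]; simp [mul_apply, Fin.sum_univ_three, h01, h02]
  have e01 : g 0 1 = b 0 0 * a₁ := by rw [h]; simp [mul_apply, Fin.sum_univ_three, h01, h02]
  have e02 : g 0 2 = b 0 0 * a₂ := by
    rw [h]; simp [mul_apply, Fin.sum_univ_three, h01, h02, vecHead, vecTail]
  have e10 : g 1 0 = b 1 0 := by rw [h]; simp [mul_apply, Fin.sum_univ_three, h12]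
  have e11 : g 1 1 = b 1 0 * a₁ + b 1 1 := by rw [h]; simp [mul_apply, Fin.sum_univ_three, h12]
  have e12 : g 1 2 = b 1 0 * a₂ + b 1 1 * a₃ := by
    rw [h]; simp [mul_apply, Fin.sum_univ_three, h12, vecHead, vecTail]
  have hX : X g = a₁ := by rw [X, e01, e00, mul_div_cancel_left₀ _ hb0]
  have hY : Y g = a₂ := by rw [Y, e02, e00, mul_div_cancel_left₀ _ hb0]
  have hC : C g = b 1 1 := by rw [C, hX, e11, e10]; ring
  have hD : D g = b 1 1 * a₃ := by rw [D, hY, e12, e10]; ring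
  refine ⟨?_, by rw [e00]; exact hb0, hX, hY, by rw [hC]; exact hb1, ?_⟩
  · rw [h, det_mul]
    have : det !![(1:ℚ_[p]), a₁, a₂; 0, 1, a₃; 0, 0, 1] = 1 := by
      simp [det_fin_three, vecHead, vecTail]
    rw [this, mul_one, hbd]; exact hdet
  · rw [W, hD, hC, mul_div_cancel_left₀ _ hb1]

lemma exists_repr {g : M3 p} (hdet : IsUnit g.det) (h0 : g 0 0 ≠ 0) (hC : C g ≠ 0) :
    ∃ b ∈ Bbar p, g = b * !![1, X g, Y g; 0, 1, W g; 0, 0, 1] := by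
  set n' : M3 p := !![1, -X g, X g * W g - Y g; 0, 1, -W g; 0, 0, 1] with hn'
  have hinv : n' * !![1, X g, Y g; 0, 1, W g; 0, 0, 1] = 1 := by
    ext i j
    fin_cases i <;> fin_cases j <;>
      simp [hn', mul_apply, Fin.sum_univ_three, Matrix.one_apply, vecHead, vecTail] <;> ring
  have key01 : (g * n') 0 1 = 0 := by
    have : (g * n') 0 1 = g 0 0 * (-X g) + g 0 1 := by
      simp [hn', mul_apply, Fin.sum_univ_three, vecHead, vecTail]
    rw [this, X]; field_simp; ring
  have key02 : (g * n') 0 2 = 0 := by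
    have : (g * n') 0 2 = g 0 0 * (X g * W g - Y g) + g 0 1 * (-W g) + g 0 2 := by
      simp [hn', mul_apply, Fin.sum_univ_three, vecHead, vecTail]
    rw [this, X, Y]; field_simp; ring
  have key12 : (g * n') 1 2 = 0 := by
    have h1 : (g * n') 1 2 = g 1 0 * (X g * W g - Y g) + g 1 1 * (-W g) + g 1 2 := by
      simp [hn', mul_apply, Fin.sum_univ_three, vecHead, vecTail]
    have h2 : g 1 0 * (X g * W g - Y g) + g 1 1 * (-W g) + g 1 2 = -(W g * C g) + D g := by
      rw [C, D]; ring
    have h3 : W g * C g = D g := by rw [W]; field_simp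
    rw [h1, h2, h3]; ring
  refine ⟨g * n', ⟨?_, key01, key02, key12⟩, ?_⟩
  · rw [det_mul]
    have : n'.det = 1 := by simp [hn', det_fin_three, vecHead, vecTail]
    rw [this, mul_one]; exact hdet
  · rw [Matrix.mul_assoc, hinv, Matrix.mul_one]

lemma xi_repr {g q : M3 p} (hq : q ∈ P1bar p) (x y : ℚ_[p])
    (h : g = q * !![1, x, y; 0, 1, 0; 0, 0, 1]) :
    IsUnit g.det ∧ g 0 0 ≠ 0 ∧ X g = x ∧ Y g = y := by
  obtain ⟨hdet, h01, h02⟩ := hq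
  have hq0 : q 0 0 ≠ 0 := by
    intro h'
    have : q.det = 0 := by simp [det_fin_three, h01, h02, h']
    rw [this] at hdet; simp at hdet
  have e00 : g 0 0 = q 0 0 := by rw [h]; simp [mul_apply, Fin.sum_univ_three, h01, h02]
  have e01 : g 0 1 = q 0 0 * x := by rw [h]; simp [mul_apply, Fin.sum_univ_three, h01, h02]
  have e02 : g 0 2 = q 0 0 * y := by
    rw [h]; simp [mul_apply, Fin.sum_univ_three, h01, h02, vecHead, vecTail]
  refine ⟨?_, by rw [e00]; exact hq0, ?_, ?_⟩
  · rw [h, det_mul]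
    have : det !![(1:ℚ_[p]), x, y; 0, 1, 0; 0, 0, 1] = 1 := by
      simp [det_fin_three, vecHead, vecTail]
    rw [this, mul_one]; exact hdet
  · rw [X, e01, e00, mul_div_cancel_left₀ _ hq0]
  · rw [Y, e02, e00, mul_div_cancel_left₀ _ hq0]

lemma xi_exists {g : M3 p} (hdet : IsUnit g.det) (h0 : g 0 0 ≠ 0) :
    ∃ q ∈ P1bar p, g = q * !![1, X g, Y g; 0, 1, 0; 0, 0, 1] := by
  set n' : M3 p := !![1, -X g, -Y g; 0, 1, 0; 0, 0, 1] with hn'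
  have hinv : n' * !![1, X g, Y g; 0, 1, 0; 0, 0, 1] = 1 := by
    ext i j
    fin_cases i <;> fin_cases j <;>
      simp [hn', mul_apply, Fin.sum_univ_three, Matrix.one_apply, vecHead, vecTail]
  have key01 : (g * n') 0 1 = 0 := by
    have : (g * n') 0 1 = g 0 0 * (-X g) + g 0 1 := by
      simp [hn', mul_apply, Fin.sum_univ_three, vecHead, vecTail]
    rw [this, X]; field_simp; ring
  have key02 : (g * n') 0 2 = 0 := by
    have : (g * n') 0 2 = g 0 0 * (-Y g) + g 0 2 := by
      simp [hn', mul_apply, Fin.sum_univ_three, vecHead, vecTail]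
    rw [this, Y]; field_simp; ring
  refine ⟨g * n', ⟨?_, key01, key02⟩, ?_⟩
  · rw [det_mul]
    have : n'.det = 1 := by simp [hn', det_fin_three, vecHead, vecTail]
    rw [this, mul_one]; exact hdet
  · rw [Matrix.mul_assoc, hinv, Matrix.mul_one]

lemma not_CD {g : M3 p} (hdet : IsUnit g.det) (h0 : g 0 0 ≠ 0) :
    C g ≠ 0 ∨ D g ≠ 0 := by
  by_contra h
  push_neg at h
  obtain ⟨hC, hD⟩ := h
  have e1 : g 1 1 * g 0 0 = g 1 0 * g 0 1 := by
    rw [C, X] at hC; field_simp at hC; linear_combination hC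
  have e2 : g 1 2 * g 0 0 = g 1 0 * g 0 2 := by
    rw [D, Y] at hD; field_simp at hD; linear_combination hD
  have hdz : g.det ≠ 0 := hdet.ne_zero
  apply hdz
  have hmul : g 0 0 * g.det = 0 := by
    rw [det_fin_three]
    linear_combination (g 2 2 * g 0 0 - g 0 2 * g 2 0) * e1 + (g 0 1 * g 2 0 - g 0 0 * g 2 1) * e2
  rcases mul_eq_zero.mp hmul with h' | h'
  · exact absurd h' h0
  · exact h'

lemma u0_rel (g : M3 p) :
    (g * u0 p) 0 0 = g 0 0 ∧ X (g * u0 p) = Y g ∧ Y (g * u0 p) = -X g ∧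
    C (g * u0 p) = D g ∧ D (g * u0 p) = -C g ∧ (IsUnit (g * u0 p).det ↔ IsUnit g.det) := by
  have e00 : (g * u0 p) 0 0 = g 0 0 := by simp [u0, mul_apply, Fin.sum_univ_three, vecHead, vecTail]
  have e01 : (g * u0 p) 0 1 = g 0 2 := by simp [u0, mul_apply, Fin.sum_univ_three, vecHead, vecTail]
  have e02 : (g * u0 p) 0 2 = -g 0 1 := by simp [u0, mul_apply, Fin.sum_univ_three, vecHead, vecTail]
  have e10 : (g * u0 p) 1 0 = g 1 0 := by simp [u0, mul_apply, Fin.sum_univ_three, vecHead, vecTail]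
  have e11 : (g * u0 p) 1 1 = g 1 2 := by simp [u0, mul_apply, Fin.sum_univ_three, vecHead, vecTail]
  have e12 : (g * u0 p) 1 2 = -g 1 1 := by simp [u0, mul_apply, Fin.sum_univ_three, vecHead, vecTail]
  have hX : X (g * u0 p) = Y g := by rw [X, Y, e01, e00]
  have hY : Y (g * u0 p) = -X g := by rw [Y, X, e02, e00, neg_div]
  refine ⟨e00, hX, hY, ?_, ?_, ?_⟩
  · rw [C, D, hX, e11, e10]
  · rw [D, C, hY, e12, e10]; ring
  · rw [det_mul]
    have : (u0 p).det = 1 := by simp [u0, det_fin_three, vecHead, vecTail]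
    rw [this, mul_one]

end S4

open S4
/-- There are well-defined functions `ψ, φ, ξ` on `GL₃(ℚ_p)` supported on the indicated
cells with value `f(y)` there, and they satisfy `φ(g·u₀) = ξ(g) − ψ(g)`. -/
theorem statement4 (p : ℕ) [Fact p.Prime] {R : Type*} [AddCommGroup R]
    (A B : Set ℚ_[p]) (hA : ∀ x ∈ A, ‖x‖ ≤ 1) (hB : ∀ y ∈ B, ‖y‖ ≤ 1)
    (hAneg : ∀ x ∈ A, -x ∈ A)
    (f : ℚ_[p] → R) :
    ∃ psi phi xi : M3 p → R,
      (∀ g : M3 p,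
        (∀ b ∈ Bbar p, ∀ x ∈ A, ∀ y ∈ B, ∀ w : ℚ_[p], ‖w‖ < 1 →
          g = b * !![1, x, y; 0, 1, w; 0, 0, 1] → psi g = f y) ∧
        ((¬ ∃ b ∈ Bbar p, ∃ x ∈ A, ∃ y ∈ B, ∃ w : ℚ_[p], ‖w‖ < 1 ∧
          g = b * !![1, x, y; 0, 1, w; 0, 0, 1]) → psi g = 0)) ∧
      (∀ g : M3 p,
        (∀ b ∈ Bbar p, ∀ x ∈ A, ∀ y ∈ B, ∀ z : ℚ_[p], ‖z‖ ≤ 1 →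
          g = b * !![1, y, x; 0, 1, z; 0, 0, 1] → phi g = f y) ∧
        ((¬ ∃ b ∈ Bbar p, ∃ x ∈ A, ∃ y ∈ B, ∃ z : ℚ_[p], ‖z‖ ≤ 1 ∧
          g = b * !![1, y, x; 0, 1, z; 0, 0, 1]) → phi g = 0)) ∧
      (∀ g : M3 p,
        (∀ q ∈ P1bar p, ∀ x ∈ A, ∀ y ∈ B,
          g = q * !![1, x, y; 0, 1, 0; 0, 0, 1] → xi g = f y) ∧
        ((¬ ∃ q ∈ P1bar p, ∃ x ∈ A, ∃ y ∈ B,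
          g = q * !![1, x, y; 0, 1, 0; 0, 0, 1]) → xi g = 0)) ∧
      (∀ g : M3 p, phi (g * u0 p) = xi g - psi g) := by
  classical
  refine ⟨
    fun g => if IsUnit g.det ∧ g 0 0 ≠ 0 ∧ X g ∈ A ∧ Y g ∈ B ∧ C g ≠ 0 ∧ ‖W g‖ < 1
      then f (Y g) else 0,
    fun g => if IsUnit g.det ∧ g 0 0 ≠ 0 ∧ Y g ∈ A ∧ X g ∈ B ∧ C g ≠ 0 ∧ ‖W g‖ ≤ 1
      then f (X g) else 0,
    fun g => if IsUnit g.det ∧ g 0 0 ≠ 0 ∧ X g ∈ A ∧ Y g ∈ B then f (Y g) else 0,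
    ?_, ?_, ?_, ?_⟩
  · intro g
    dsimp only
    constructor
    · intro b hb x hx y hy w hw h
      obtain ⟨hdet, h0, hX, hY, hC, hW⟩ := repr_lemma hb x y w h
      rw [if_pos ⟨hdet, h0, by rw [hX]; exact hx, by rw [hY]; exact hy, hC,
        by rw [hW]; exact hw⟩, hY]
    · intro hno
      rw [if_neg]
      rintro ⟨hdet, h0, hX, hY, hC, hW⟩
      obtain ⟨b, hb, hg⟩ := exists_repr hdet h0 hC
      exact hno ⟨b, hb, _, hX, _, hY, _, hW, hg⟩
  · intro g
    dsimp only
    constructor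
    · intro b hb x hx y hy z hz h
      obtain ⟨hdet, h0, hX, hY, hC, hW⟩ := repr_lemma hb y x z h
      rw [if_pos ⟨hdet, h0, by rw [hY]; exact hx, by rw [hX]; exact hy, hC,
        by rw [hW]; exact hz⟩, hX]
    · intro hno
      rw [if_neg]
      rintro ⟨hdet, h0, hY, hX, hC, hW⟩
      obtain ⟨b, hb, hg⟩ := exists_repr hdet h0 hC
      exact hno ⟨b, hb, _, hY, _, hX, _, hW, hg⟩
  · intro g
    dsimp only
    constructor
    · intro q hq x hx y hy h
      obtain ⟨hdet, h0, hX, hY⟩ := xi_repr hq x y h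
      rw [if_pos ⟨hdet, h0, by rw [hX]; exact hx, by rw [hY]; exact hy⟩, hY]
    · intro hno
      rw [if_neg]
      rintro ⟨hdet, h0, hX, hY⟩
      obtain ⟨q, hq, hg⟩ := xi_exists hdet h0
      exact hno ⟨q, hq, _, hX, _, hY, hg⟩
  · intro g
    dsimp only
    obtain ⟨e00, hX, hY, hC, hD, hdet⟩ := u0_rel (p := p) g
    by_cases hbase : IsUnit g.det ∧ g 0 0 ≠ 0 ∧ X g ∈ A ∧ Y g ∈ B
    · obtain ⟨h1, h2, h3, h4⟩ := hbase
      by_cases hcd : ‖C g‖ ≤ ‖D g‖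
      · -- D ≠ 0, phi' = f(Y g), xi = f(Y g), psi = 0
        have hDne : D g ≠ 0 := by
          intro h'
          have hC0 : ‖C g‖ ≤ 0 := by rw [h', norm_zero] at hcd; exact hcd
          have hCz : C g = 0 := norm_le_zero_iff.mp hC0
          rcases not_CD h1 h2 with hc | hd
          · exact hc hCz
          · exact hd h'
        have hWle : ‖W (g * u0 p)‖ ≤ 1 := by
          rw [W, hC, hD, norm_div, norm_neg]
          exact (div_le_one (norm_pos_iff.mpr hDne)).mpr hcd
        have hpsi0 : ¬(IsUnit g.det ∧ g 0 0 ≠ 0 ∧ X g ∈ A ∧ Y g ∈ B ∧ C g ≠ 0 ∧ ‖W g‖ < 1) := by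
          rintro ⟨-, -, -, -, hC', hW'⟩
          rw [W, norm_div] at hW'
          have := (div_lt_one (norm_pos_iff.mpr hC')).mp hW'
          linarith
        rw [if_pos ⟨hdet.mpr h1, by rw [e00]; exact h2, by rw [hY]; exact hAneg _ h3,
            by rw [hX]; exact h4, by rw [hC]; exact hDne, hWle⟩,
          if_pos ⟨h1, h2, h3, h4⟩, if_neg hpsi0, hX, sub_zero]
      · -- ‖D‖ < ‖C‖ : C ≠ 0, psi = f(Y g), xi = f(Y g), phi' = 0
        push_neg at hcd
        have hCne : C g ≠ 0 := by
          intro h'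
          rw [h', norm_zero] at hcd
          exact absurd hcd (norm_nonneg (D g)).not_gt
        have hWlt : ‖W g‖ < 1 := by
          rw [W, norm_div]
          exact (div_lt_one (norm_pos_iff.mpr hCne)).mpr hcd
        have hphi0 : ¬(IsUnit (g * u0 p).det ∧ (g * u0 p) 0 0 ≠ 0 ∧ Y (g * u0 p) ∈ A ∧
            X (g * u0 p) ∈ B ∧ C (g * u0 p) ≠ 0 ∧ ‖W (g * u0 p)‖ ≤ 1) := by
          rintro ⟨-, -, -, -, hC'', hW''⟩
          rw [hC] at hC''
          rw [W, hC, hD, norm_div, norm_neg] at hW''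
          have := (div_le_one (norm_pos_iff.mpr hC'')).mp hW''
          linarith
        rw [if_neg hphi0, if_pos ⟨h1, h2, h3, h4⟩,
          if_pos ⟨h1, h2, h3, h4, hCne, hWlt⟩, sub_self]
    · have hphi0 : ¬(IsUnit (g * u0 p).det ∧ (g * u0 p) 0 0 ≠ 0 ∧ Y (g * u0 p) ∈ A ∧
          X (g * u0 p) ∈ B ∧ C (g * u0 p) ≠ 0 ∧ ‖W (g * u0 p)‖ ≤ 1) := by
        rintro ⟨hd', h0', hA', hB', -, -⟩
        refine hbase ⟨hdet.mp hd', by rw [e00] at h0'; exact h0', ?_, by rw [hX] at hB'; exact hB'⟩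
        rw [hY] at hA'
        have := hAneg _ hA'
        rwa [neg_neg] at this
      have hpsi0 : ¬(IsUnit g.det ∧ g 0 0 ≠ 0 ∧ X g ∈ A ∧ Y g ∈ B ∧ C g ≠ 0 ∧ ‖W g‖ < 1) := by
        rintro ⟨a, b, c, d, -, -⟩
        exact hbase ⟨a, b, c, d⟩
      rw [if_neg hphi0, if_neg hbase, if_neg hpsi0, sub_zero]
end
end

section
/- Let n ≥ 2 and let λ̃ ∈ ℤ^n satisfy λ̃_i − λ̃_{i+1} ≥ n for all 1 ≤ i ≤ n−1 and λ̃_n ≥ n. For B ⊆ {1,…,n} with B = {b₁ < ⋯ < b_l} and B^c = {b'₁ < ⋯ < b'_{n−l}}, define λ_B ∈ ℤ^n by (λ_B)_i = λ̃_{b'_i} + ρ_{b'_i} − ρ_i for 1 ≤ i ≤ n−l and (λ_B)_i = −(λ̃_{b_{n+1−i}} + ρ_{b_{n+1−i}}) − ρ_i for n−l < i ≤ n, where ρ = (n, n−1, …, 1). Then for all subsets B, C ⊆ {1,…,n} one has λ_C ≠ λ_B + (n−1, n−1, …, n−1). -/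
/-- `ρ_i = n + 1 − i` (1-based), i.e. `ρ i = n − i` for the 0-based index `i : Fin n`. -/
def rhoInt (n : ℕ) (i : Fin n) : ℤ := (n : ℤ) - (i : ℕ)

/-- The `GL_n`-weight `λ_B` attached to `λ̃ ∈ ℤ^n` and a subset `B ⊆ {1,…,n}`:
`(λ_B)_i = λ̃_{b'_i} + ρ_{b'_i} − ρ_i` for `1 ≤ i ≤ n−l` and
`(λ_B)_i = −(λ̃_{b_{n+1−i}} + ρ_{b_{n+1−i}}) − ρ_i` for `n−l < i ≤ n`, where
`B = {b₁ < ⋯ < b_l}` and `B^c = {b'₁ < ⋯ < b'_{n−l}}`. -/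
def lamB {n : ℕ} (lt : Fin n → ℤ) (B : Finset (Fin n)) : Fin n → ℤ := fun i =>
  if h : (i : ℕ) < Bᶜ.card then
    lt (Bᶜ.orderEmbOfFin rfl ⟨(i : ℕ), h⟩) + rhoInt n (Bᶜ.orderEmbOfFin rfl ⟨(i : ℕ), h⟩)
      - rhoInt n i
  else
    have hcard : Bᶜ.card = n - B.card := by simpa using Finset.card_compl B
    have hi : (i : ℕ) < n := i.isLt
    have hlt : n - 1 - (i : ℕ) < B.card := by omega
    (-(lt (B.orderEmbOfFin rfl ⟨n - 1 - (i : ℕ), hlt⟩)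
        + rhoInt n (B.orderEmbOfFin rfl ⟨n - 1 - (i : ℕ), hlt⟩))
      - rhoInt n i)

lemma lamB_spec {n : ℕ} (lt : Fin n → ℤ) (B : Finset (Fin n)) (i : Fin n) :
    ∃ j : Fin n, lamB lt B i = lt j + rhoInt n j - rhoInt n i ∨
      lamB lt B i = -(lt j + rhoInt n j) - rhoInt n i := by
  unfold lamB
  split
  · exact ⟨_, Or.inl rfl⟩
  · exact ⟨_, Or.inr rfl⟩

lemma lt_ge {n : ℕ} (lt : Fin n → ℤ)
    (hreg : ∀ i j : Fin n, (j : ℕ) = (i : ℕ) + 1 → (n : ℤ) ≤ lt i - lt j)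
    (hlast : ∀ i : Fin n, (i : ℕ) = n - 1 → (n : ℤ) ≤ lt i) :
    ∀ j : Fin n, (n : ℤ) ≤ lt j := by
  have key : ∀ d : ℕ, ∀ j : Fin n, (j : ℕ) = n - 1 - d → (n : ℤ) ≤ lt j := by
    intro d
    induction d with
    | zero => intro j hj; exact hlast j (by omega)
    | succ d ih =>
      intro j hj
      by_cases hd : n - 1 - (d + 1) = n - 1 - d
      · exact ih j (by omega)
      · have hj1 : (j : ℕ) + 1 < n := by omega
        have h1 := hreg j ⟨(j : ℕ) + 1, hj1⟩ rfl
        have h2 := ih ⟨(j : ℕ) + 1, hj1⟩ (by simp; omega)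
        linarith
  intro j
  exact key (n - 1 - (j : ℕ)) j (by have := j.isLt; omega)

lemma mu_pos {n : ℕ} (lt : Fin n → ℤ)
    (hreg : ∀ i j : Fin n, (j : ℕ) = (i : ℕ) + 1 → (n : ℤ) ≤ lt i - lt j)
    (hlast : ∀ i : Fin n, (i : ℕ) = n - 1 → (n : ℤ) ≤ lt i)
    (j : Fin n) : (n : ℤ) + 1 ≤ lt j + rhoInt n j := by
  have h1 := lt_ge lt hreg hlast j
  have h2 : ((j : ℕ) : ℤ) + 1 ≤ (n : ℤ) := by exact_mod_cast j.isLt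
  unfold rhoInt
  linarith

lemma mu_gap {n : ℕ} (lt : Fin n → ℤ)
    (hreg : ∀ i j : Fin n, (j : ℕ) = (i : ℕ) + 1 → (n : ℤ) ≤ lt i - lt j)
    (a b : Fin n) (hab : (a : ℕ) < (b : ℕ)) :
    lt b + rhoInt n b + ((n : ℤ) + 1) ≤ lt a + rhoInt n a := by
  have step : ∀ (k : ℕ) (h : k + 1 < n),
      lt ⟨k + 1, h⟩ + rhoInt n ⟨k + 1, h⟩ + ((n : ℤ) + 1) ≤
        lt ⟨k, by omega⟩ + rhoInt n ⟨k, by omega⟩ := by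
    intro k h
    have := hreg ⟨k, by omega⟩ ⟨k + 1, h⟩ rfl
    unfold rhoInt
    push_cast
    linarith
  have main : ∀ m : ℕ, ∀ (hm : m < n) (ha : (a : ℕ) < m),
      lt ⟨m, hm⟩ + rhoInt n ⟨m, hm⟩ + ((n : ℤ) + 1) ≤ lt a + rhoInt n a := by
    intro m
    induction m with
    | zero => intro hm ha; omega
    | succ m ih =>
      intro hm ha
      rcases Nat.lt_or_ge (a : ℕ) m with h | h
      · have := ih (by omega) h
        have := step m hm
        linarith
      · have hA : (a : ℕ) = m := by omega
        have haeq : a = ⟨m, by omega⟩ := Fin.ext hA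
        have := step m hm
        rw [haeq]
        linarith
  have hb : b = ⟨(b : ℕ), b.isLt⟩ := rfl
  rw [hb]
  exact main (b : ℕ) b.isLt hab

lemma keyNe {n : ℕ} (hn : 2 ≤ n) (lt : Fin n → ℤ)
    (hreg : ∀ i j : Fin n, (j : ℕ) = (i : ℕ) + 1 → (n : ℤ) ≤ lt i - lt j)
    (a b : Fin n) :
    lt a + rhoInt n a ≠ lt b + rhoInt n b + ((n : ℤ) - 1) := by
  have hn' : (2 : ℤ) ≤ (n : ℤ) := by exact_mod_cast hn
  intro h
  rcases lt_trichotomy (a : ℕ) (b : ℕ) with hab | hab | hab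
  · have := mu_gap lt hreg a b hab
    linarith
  · have : a = b := Fin.ext hab
    rw [this] at h
    linarith
  · have := mu_gap lt hreg b a hab
    linarith

/-- If `λ̃` is sufficiently regular (`λ̃_i − λ̃_{i+1} ≥ n` and `λ̃_n ≥ n`), then for all
subsets `B, C ⊆ {1,…,n}` one has `λ_C ≠ λ_B + (n−1,…,n−1)`. -/
theorem statement14 (n : ℕ) (hn : 2 ≤ n) (lt : Fin n → ℤ)
    (hreg : ∀ i j : Fin n, (j : ℕ) = (i : ℕ) + 1 → (n : ℤ) ≤ lt i - lt j)
    (hlast : ∀ i : Fin n, (i : ℕ) = n - 1 → (n : ℤ) ≤ lt i)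
    (B C : Finset (Fin n)) :
    lamB lt C ≠ fun i => lamB lt B i + ((n : ℤ) - 1) := by
  intro h
  have hn' : (2 : ℤ) ≤ (n : ℤ) := by exact_mod_cast hn
  have hi0 : 0 < n := by omega
  have h0 := congrFun h ⟨0, hi0⟩
  obtain ⟨a, ha⟩ := lamB_spec lt C ⟨0, hi0⟩
  obtain ⟨b, hb⟩ := lamB_spec lt B ⟨0, hi0⟩
  have hpa := mu_pos lt hreg hlast a
  have hpb := mu_pos lt hreg hlast b
  rcases ha with ha | ha <;> rcases hb with hb | hb <;> rw [ha, hb] at h0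
  · exact keyNe hn lt hreg a b (by linarith)
  · linarith
  · linarith
  · exact keyNe hn lt hreg b a (by linarith)
end

section
/- Let p be a prime, n ≥ 1, K ≥ 1 an integer, and set d = n(n+1)/2 and ρ = (n, n−1, …, 1) ∈ ℤ^n. For B ⊆ {1,…,n} let w_B be the signed-permutation representative attached to B, and define T_B : ℤ^n → ℤ^n by T_B(μ)_i = μ̂_{w_B(i)}, where μ̂_j = μ_j for 1 ≤ j ≤ n and μ̂_j = −μ_{2n+1−j} for n+1 ≤ j ≤ 2n. Then there exists λ ∈ ℤ^n with λ₁ ≥ λ₂ ≥ ⋯ ≥ λ_n = 0 and every λ_i divisible by K(p−1), such that for every integer j with 0 ≤ j ≤ d there exist a ∈ (p−1)ℤ and a subset B ⊆ {1,…,n} with Σ_{b∈B}(n+1−b) = j, for which the vector ν := T_B(λ + a·(1,…,1) + ρ) − ρ satisfies ν_i − ν_{i+1} ≥ n for all 1 ≤ i ≤ n−1 and ν_n ≥ n. -/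
/-- The signed-permutation representative `w_B` attached to `B ⊆ {1,…,n}` (1-based):
for `c ∈ {1,…,n}`, `w_B(c) = n + (rank of c in B)` if `c ∈ B` and
`w_B(c) = (rank of c in B^c)` if `c ∉ B`; for `n+1 ≤ c ≤ 2n`,
`w_B(c) = 2n+1 − w_B(2n+1−c)`. -/
def wB (n : ℕ) (B : Finset ℕ) (c : ℕ) : ℕ :=
  let f : ℕ → ℕ := fun i =>
    if i ∈ B then n + (B.filter (fun b => b ≤ i)).card
    else ((Finset.Icc 1 n \ B).filter (fun b => b ≤ i)).card
  if c ≤ n then f c else 2 * n + 1 - f (2 * n + 1 - c)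

/-- The extension `μ̂` of a vector `μ ∈ ℤ^n` (1-based indices `1,…,n`) to indices
`1,…,2n`: `μ̂_j = μ_j` for `j ≤ n` and `μ̂_j = −μ_{2n+1−j}` for `j > n`. -/
def hatVec (n : ℕ) (μ : ℕ → ℤ) (j : ℕ) : ℤ := if j ≤ n then μ j else -μ (2 * n + 1 - j)

/-- `ν = T_B(λ + a·(1,…,1) + ρ) − ρ`, where `T_B(μ)_i = μ̂_{w_B(i)}` and
`ρ_i = n + 1 − i`. -/
def nuVec (n : ℕ) (lam : ℕ → ℤ) (a : ℤ) (B : Finset ℕ) (i : ℕ) : ℤ :=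
  hatVec n (fun r => lam r + a + ((n : ℤ) + 1 - (r : ℕ))) (wB n B i) - ((n : ℤ) + 1 - (i : ℕ))


private lemma tri_succ (k : ℕ) : (k+1)*(k+2)/2 = k*(k+1)/2 + (k+1) := by
  have h : (k+1)*(k+2) = k*(k+1) + 2*(k+1) := by ring
  omega

private lemma exists_kt : ∀ n j : ℕ, j ≤ n*(n+1)/2 → ∃ k t, k ≤ n ∧ t ≤ k ∧ j + t = k*(k+1)/2 := by
  intro n
  induction n with
  | zero => intro j hj; exact ⟨0, 0, le_rfl, le_rfl, by simpa using hj⟩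
  | succ n ih =>
    intro j hj
    by_cases h : j ≤ n*(n+1)/2
    · obtain ⟨k, t, h1, h2, h3⟩ := ih j h
      exact ⟨k, t, h1.trans (Nat.le_succ n), h2, h3⟩
    · refine ⟨n+1, (n+1)*(n+2)/2 - j, le_rfl, ?_, ?_⟩ <;>
      · have h4 := tri_succ n
        have h5 : (n+1)*(n+1+1) = (n+1)*(n+2) := by ring
        omega

private lemma sum_Icc_tri : ∀ (k n : ℕ), k ≤ n →
    (∑ b ∈ Finset.Icc (n - k + 1) n, (n + 1 - b)) = k*(k+1)/2 := by
  intro k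
  induction k with
  | zero =>
    intro n h
    rw [Finset.Icc_eq_empty (by omega)]
    simp
  | succ k ih =>
    intro n h
    have h1 : Finset.Icc (n - (k+1) + 1) n = insert (n - k) (Finset.Icc (n - k + 1) n) := by
      ext x; simp only [Finset.mem_Icc, Finset.mem_insert]; omega
    rw [h1, Finset.sum_insert (by simp only [Finset.mem_Icc]; omega)]
    have h2 := ih n (by omega)
    rw [h2]
    have h3 : (k+1)*(k+2) = k*(k+1) + 2*(k+1) := by ring
    have h4 : (k+1)*(k+1+1) = (k+1)*(k+2) := by ring
    omega

def lamF (C : ℤ) (n i : ℕ) : ℤ := C * (3 ^ (n - i) - 1)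

private lemma three_pow_ge_one (e : ℕ) : (1:ℤ) ≤ 3 ^ e := one_le_pow₀ (by norm_num)

private lemma lamF_nonneg {C : ℤ} (hC : 0 ≤ C) (n i : ℕ) : 0 ≤ lamF C n i :=
  mul_nonneg hC (by linarith [three_pow_ge_one (n - i)])

private lemma lamF_mono {C : ℤ} (hC : 0 ≤ C) (n : ℕ) {i j : ℕ} (h : i ≤ j) :
    lamF C n j ≤ lamF C n i := by
  unfold lamF
  have h3 : (3:ℤ) ^ (n - j) ≤ 3 ^ (n - i) := pow_le_pow_right₀ (by norm_num) (by omega)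
  nlinarith

private lemma lamF_apply_n (C : ℤ) (n : ℕ) : lamF C n n = 0 := by simp [lamF]

private lemma lamF_gap {C : ℤ} (hC : 0 ≤ C) {n i : ℕ} (h : i < n) :
    2 * C ≤ lamF C n i - lamF C n (i+1) := by
  unfold lamF
  have he : n - i = (n - (i+1)) + 1 := by omega
  rw [he, pow_succ]
  have h1 := three_pow_ge_one (n - (i+1))
  nlinarith

private lemma lamF_conv3 {C : ℤ} (hC : 0 ≤ C) {n i : ℕ} (h : i < n) :
    C ≤ lamF C n i - 2 * lamF C n (i+1) := by
  unfold lamF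
  have he : n - i = (n - (i+1)) + 1 := by omega
  rw [he, pow_succ]
  have h1 := three_pow_ge_one (n - (i+1))
  nlinarith

private lemma lamF_conv2 {C : ℤ} (hC : 0 ≤ C) {n i : ℕ} (h : i + 2 ≤ n) :
    C ≤ lamF C n i - lamF C n (i+1) - lamF C n (i+2) := by
  unfold lamF
  have h1 : n - i = (n - (i+2)) + 2 := by omega
  have h2 : n - (i+1) = (n - (i+2)) + 1 := by omega
  rw [h1, h2, pow_succ, pow_succ]
  have h3 := three_pow_ge_one (n - (i+2))
  nlinarith

private lemma wB_le_n (n : ℕ) (B : Finset ℕ) (i : ℕ) (h : i ≤ n) :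
    wB n B i = if i ∈ B then n + (B.filter (fun b => b ≤ i)).card
      else ((Finset.Icc 1 n \ B).filter (fun b => b ≤ i)).card := by
  unfold wB
  simp [h]

private lemma nu_eval (n m q : ℕ) (lam : ℕ → ℤ) (a : ℤ)
    (hm : m ≤ n) (hq1 : m + 1 ≤ q)
    (i : ℕ) (hi1 : 1 ≤ i) (hi2 : i ≤ n) :
    nuVec n lam a ((Finset.Icc (m+1) n).erase q) i =
      if i ≤ m then lam i + a
      else if i = q then lam (m+1) + a + (i : ℤ) - (m:ℤ) - 1
      else if i < q then -lam (n+m+1-i) - a - ((n:ℤ) - (m:ℤ) + 1)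
      else -lam (n+m+2-i) - a - ((n:ℤ) - (m:ℤ)) := by
  by_cases h1 : i ≤ m
  · -- i ∉ B, complement rank i
    have hnB : i ∉ (Finset.Icc (m+1) n).erase q := by
      simp only [Finset.mem_erase, Finset.mem_Icc]; omega
    have hset : (Finset.Icc 1 n \ (Finset.Icc (m+1) n).erase q).filter (fun b => b ≤ i)
        = Finset.Icc 1 i := by
      ext x
      simp only [Finset.mem_filter, Finset.mem_sdiff, Finset.mem_erase, Finset.mem_Icc]
      omega
    have hw : wB n ((Finset.Icc (m+1) n).erase q) i = i := by
      rw [wB_le_n n _ i hi2, if_neg hnB, hset, Nat.card_Icc]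
      omega
    unfold nuVec hatVec
    rw [hw, if_pos hi2, if_pos h1]
    push_cast
    ring
  · by_cases h2 : i = q
    · -- i = q, complement rank m+1
      have hnB : i ∉ (Finset.Icc (m+1) n).erase q := by
        simp only [Finset.mem_erase, Finset.mem_Icc]; omega
      have hset : (Finset.Icc 1 n \ (Finset.Icc (m+1) n).erase q).filter (fun b => b ≤ i)
          = insert q (Finset.Icc 1 m) := by
        ext x
        simp only [Finset.mem_filter, Finset.mem_sdiff, Finset.mem_erase, Finset.mem_Icc,
          Finset.mem_insert]
        omega
      have hw : wB n ((Finset.Icc (m+1) n).erase q) i = m + 1 := by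
        rw [wB_le_n n _ i hi2, if_neg hnB, hset,
          Finset.card_insert_of_notMem (by simp only [Finset.mem_Icc]; omega), Nat.card_Icc]
        omega
      unfold nuVec hatVec
      rw [hw, if_pos (by omega : m + 1 ≤ n), if_neg h1, if_pos h2]
      push_cast
      omega
    · -- i ∈ B
      have hB : i ∈ (Finset.Icc (m+1) n).erase q := by
        simp only [Finset.mem_erase, Finset.mem_Icc]; omega
      have hset : ((Finset.Icc (m+1) n).erase q).filter (fun b => b ≤ i)
          = (Finset.Icc (m+1) i).erase q := by
        ext x
        simp only [Finset.mem_filter, Finset.mem_erase, Finset.mem_Icc]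
        omega
      by_cases h3 : i < q
      · have hcard : (((Finset.Icc (m+1) n).erase q).filter (fun b => b ≤ i)).card = i - m := by
          rw [hset, Finset.erase_eq_of_notMem (by simp only [Finset.mem_Icc]; omega),
            Nat.card_Icc]
          omega
        have hw : wB n ((Finset.Icc (m+1) n).erase q) i = n + (i - m) := by
          rw [wB_le_n n _ i hi2, if_pos hB, hcard]
        unfold nuVec hatVec
        rw [hw, if_neg (by omega : ¬ (n + (i - m) ≤ n))]
        have harg : 2 * n + 1 - (n + (i - m)) = n + m + 1 - i := by omega
        rw [harg, if_neg h1, if_neg h2, if_pos h3]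
        have hc : ((n + m + 1 - i : ℕ) : ℤ) = (n:ℤ) + (m:ℤ) + 1 - (i:ℤ) := by omega
        simp only [hc]
        ring
      · have hcard : (((Finset.Icc (m+1) n).erase q).filter (fun b => b ≤ i)).card
            = i - m - 1 := by
          rw [hset, Finset.card_erase_of_mem (by simp only [Finset.mem_Icc]; omega),
            Nat.card_Icc]
          omega
        have hw : wB n ((Finset.Icc (m+1) n).erase q) i = n + (i - m - 1) := by
          rw [wB_le_n n _ i hi2, if_pos hB, hcard]
        unfold nuVec hatVec
        rw [hw, if_neg (by omega : ¬ (n + (i - m - 1) ≤ n))]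
        have harg : 2 * n + 1 - (n + (i - m - 1)) = n + m + 2 - i := by omega
        rw [harg, if_neg h1, if_neg h2, if_neg h3]
        have hc : ((n + m + 2 - i : ℕ) : ℤ) = (n:ℤ) + (m:ℤ) + 2 - (i:ℤ) := by omega
        simp only [hc]
        ring

private lemma ineq_core (n m q : ℕ) (C a : ℤ) (hn : 1 ≤ n) (hm : m ≤ n)
    (hq1 : m + 1 ≤ q) (hq2 : q ≤ n + 1)
    (hC0 : 0 ≤ C) (hCn : (n:ℤ) ≤ 2 * C)
    (hlow1 : 1 ≤ m → m + 1 < q → (m : ℤ) - 1 - lamF C n m ≤ 2 * a)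
    (hup1 : q ≤ n → m + 1 < q →
        2 * a ≤ -lamF C n (n+m+2-q) - lamF C n (m+1) - (2*(n:ℤ) + (q:ℤ) - 2*(m:ℤ)))
    (hlow2 : q ≤ n → 2*(m:ℤ) + 2 - lamF C n (m+1) - lamF C n (n+m+1-q) ≤ 2 * a)
    (hup2 : q < n → a ≤ -lamF C n (m+2) - (2*(n:ℤ) - (m:ℤ)))
    (hup3 : m < n → q = n + 1 → a ≤ -lamF C n (m+1) - (2*(n:ℤ) - (m:ℤ) + 1))
    (hlow3 : n ≤ m → (n:ℤ) ≤ a) :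
    (∀ i : ℕ, 1 ≤ i → i < n → (n:ℤ) ≤
        nuVec n (lamF C n) a ((Finset.Icc (m+1) n).erase q) i
          - nuVec n (lamF C n) a ((Finset.Icc (m+1) n).erase q) (i+1)) ∧
    (n:ℤ) ≤ nuVec n (lamF C n) a ((Finset.Icc (m+1) n).erase q) n := by
  constructor
  · intro i hi1 hi2
    rw [nu_eval n m q _ a hm hq1 i hi1 (by omega),
        nu_eval n m q _ a hm hq1 (i+1) (by omega) (by omega)]
    by_cases c1 : i + 1 ≤ m
    · rw [if_pos (by omega : i ≤ m), if_pos c1]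
      have hg := lamF_gap hC0 (show i < n by omega)
      linarith
    · by_cases c2 : i ≤ m
      · -- i = m
        have hmi : m = i := by omega
        subst hmi
        rw [if_pos c2, if_neg c1]
        by_cases c3 : m + 1 = q
        · rw [if_pos c3]
          have hg := lamF_gap hC0 (show m < n by omega)
          push_cast
          linarith
        · rw [if_neg c3, if_pos (by omega : m + 1 < q)]
          have he : n + m + 1 - (m + 1) = n := by omega
          rw [he, lamF_apply_n]
          have hl := hlow1 (by omega) (by omega)
          push_cast
          linarith
      · -- i > m
        rw [if_neg c2]
        by_cases c4 : i = q
        · rw [if_pos c4, if_neg (by omega : ¬ i + 1 ≤ m), if_neg (by omega : ¬ i + 1 = q),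
            if_neg (by omega : ¬ i + 1 < q)]
          have he : n + m + 2 - (i + 1) = n + m + 1 - q := by omega
          rw [he]
          have hl := hlow2 (by omega)
          push_cast
          linarith
        · rw [if_neg c4]
          by_cases c5 : i < q
          · rw [if_pos c5]
            by_cases c6 : i + 1 = q
            · rw [if_neg (by omega : ¬ i + 1 ≤ m), if_pos c6]
              have he : n + m + 1 - i = n + m + 2 - q := by omega
              rw [he]
              have hu := hup1 (by omega) (by omega)
              push_cast
              linarith
            · rw [if_neg (by omega : ¬ i + 1 ≤ m), if_neg c6,
                if_pos (by omega : i + 1 < q)]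
              have he : n + m + 1 - (i + 1) = (n + m - i) := by omega
              have he2 : n + m + 1 - i = (n + m - i) + 1 := by omega
              rw [he, he2]
              have hg := lamF_gap hC0 (show n + m - i < n by omega)
              linarith
          · rw [if_neg c5, if_neg (by omega : ¬ i + 1 ≤ m), if_neg (by omega : ¬ i + 1 = q),
              if_neg (by omega : ¬ i + 1 < q)]
            have he : n + m + 2 - (i + 1) = (n + m + 1 - i) := by omega
            have he2 : n + m + 2 - i = (n + m + 1 - i) + 1 := by omega
            rw [he, he2]
            have hg := lamF_gap hC0 (show n + m + 1 - i < n by omega)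
            linarith
  · rw [nu_eval n m q _ a hm hq1 n hn le_rfl]
    by_cases d1 : n ≤ m
    · rw [if_pos d1]
      have hmn : m = n := by omega
      subst hmn
      rw [lamF_apply_n]
      have := hlow3 le_rfl
      linarith
    · rw [if_neg d1]
      by_cases d2 : n = q
      · rw [if_pos d2]
        have he : n + m + 1 - q = m + 1 := by omega
        have hl := hlow2 (by omega)
        rw [he] at hl
        push_cast
        linarith
      · rw [if_neg d2]
        by_cases d3 : n < q
        · rw [if_pos d3]
          have he : n + m + 1 - n = m + 1 := by omega
          rw [he]
          have hu := hup3 (by omega) (by omega)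
          linarith
        · rw [if_neg d3]
          have he : n + m + 2 - n = m + 2 := by omega
          rw [he]
          have hu := hup2 (by omega)
          linarith

/-- There is a dominant weight `λ ∈ ℤ^n` with `λ_n = 0` and all entries divisible by
`K(p−1)` such that, for every `0 ≤ j ≤ d = n(n+1)/2`, there are `a ∈ (p−1)ℤ` and
`B ⊆ {1,…,n}` with `Σ_{b∈B}(n+1−b) = j` for which
`ν = T_B(λ + a·(1,…,1) + ρ) − ρ` satisfies `ν_i − ν_{i+1} ≥ n` (for `1 ≤ i ≤ n−1`)
and `ν_n ≥ n`. -/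
theorem statement15 (p : ℕ) (hp : p.Prime) (n : ℕ) (hn : 1 ≤ n) (K : ℕ) (hK : 1 ≤ K) :
    ∃ lam : ℕ → ℤ,
      (∀ i : ℕ, 1 ≤ i → i < n → lam (i + 1) ≤ lam i) ∧
      lam n = 0 ∧
      (∀ i : ℕ, 1 ≤ i → i ≤ n → ((K * (p - 1) : ℕ) : ℤ) ∣ lam i) ∧
      (∀ j : ℕ, j ≤ n * (n + 1) / 2 →
        ∃ a : ℤ, ((p - 1 : ℕ) : ℤ) ∣ a ∧
          ∃ B : Finset ℕ, B ⊆ Finset.Icc 1 n ∧ (∑ b ∈ B, (n + 1 - b)) = j ∧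
            (∀ i : ℕ, 1 ≤ i → i < n →
              (n : ℤ) ≤ nuVec n lam a B i - nuVec n lam a B (i + 1)) ∧
            (n : ℤ) ≤ nuVec n lam a B n) := by
  have hp2 := hp.two_le
  have hp1 : 1 ≤ p - 1 := by omega
  set P : ℤ := ((p - 1 : ℕ) : ℤ) with hPdef
  have hP : (1:ℤ) ≤ P := by rw [hPdef]; exact_mod_cast hp1
  set C : ℤ := ((K * (p - 1) * (6 * n + 12) : ℕ) : ℤ) with hCdef
  have hC0 : (0:ℤ) ≤ C := by rw [hCdef]; positivity
  have hPn : (n:ℤ) ≤ P * (n:ℤ) := le_mul_of_one_le_left (by positivity) hP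
  have hCbig : 2 * P * (2 * (n:ℤ) + 3) + (n:ℤ) + 5 ≤ C := by
    have h1 : (p-1) * (6*n+12) ≤ K * ((p-1) * (6*n+12)) :=
      Nat.le_mul_of_pos_left _ hK
    have h2 : 2*(p-1)*(2*n+3) + n + 5 ≤ (p-1)*(6*n+12) := by nlinarith
    have h3 : 2*(p-1)*(2*n+3) + n + 5 ≤ K * (p-1) * (6*n+12) :=
      (h2.trans h1).trans_eq (mul_assoc K (p-1) (6*n+12)).symm
    have h4 := (Nat.cast_le (α := ℤ)).mpr h3
    push_cast at h4
    rw [hPdef, hCdef]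
    push_cast
    linarith
  have hCn : (n:ℤ) ≤ 2 * C := by nlinarith
  have hdl : ∀ i : ℕ, P ∣ lamF C n i := by
    intro i
    refine ⟨(K:ℤ) * ((6*(n:ℤ)+12)) * (3^(n-i) - 1), ?_⟩
    unfold lamF
    rw [hCdef, hPdef]
    push_cast
    ring
  refine ⟨fun i => lamF C n i, ?_, ?_, ?_, ?_⟩
  · intro i _ _
    exact lamF_mono hC0 n (Nat.le_succ i)
  · exact lamF_apply_n C n
  · intro i _ _
    refine ⟨((6*(n:ℤ)+12)) * (3^(n-i) - 1), ?_⟩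
    show lamF C n i = _
    unfold lamF
    rw [hCdef]
    push_cast
    ring
  · intro j hj
    obtain ⟨k, t, hk, ht, hjt⟩ := exists_kt n j hj
    set m := n - k with hmdef
    set q := n + 1 - t with hqdef
    have hm : m ≤ n := by omega
    have hq1 : m + 1 ≤ q := by omega
    have hq2 : q ≤ n + 1 := by omega
    have hBsub : ((Finset.Icc (m+1) n).erase q) ⊆ Finset.Icc 1 n :=
      (Finset.erase_subset _ _).trans (Finset.Icc_subset_Icc (by omega) le_rfl)
    have hsum : (∑ b ∈ (Finset.Icc (m+1) n).erase q, (n + 1 - b)) = j := by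
      have hIcc : Finset.Icc (m+1) n = Finset.Icc (n-k+1) n := by rw [hmdef]
      by_cases ht0 : t = 0
      · rw [hIcc, Finset.erase_eq_of_notMem (by simp only [Finset.mem_Icc]; omega),
          sum_Icc_tri k n hk]
        omega
      · have hqmem : q ∈ Finset.Icc (m+1) n := by simp only [Finset.mem_Icc]; omega
        have h5 := Finset.sum_erase_add (Finset.Icc (m+1) n) (fun b => n + 1 - b) hqmem
        have h6 : (∑ b ∈ Finset.Icc (m+1) n, (n + 1 - b)) = k*(k+1)/2 := by
          rw [hIcc]; exact sum_Icc_tri k n hk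
        omega
    by_cases hk0 : k = 0
    · -- scenario I : B = ∅, m = n, q = n+1
      have ht0 : t = 0 := by omega
      refine ⟨P * ((n:ℤ) + 1), dvd_mul_right P _, _, hBsub, hsum, ?_, ?_⟩ <;>
      · have hcore := ineq_core n m q C (P * ((n:ℤ)+1)) hn hm hq1 hq2 hC0 hCn
          (by intro _ h; exfalso; omega)
          (by intro h _; exfalso; omega)
          (by intro h; exfalso; omega)
          (by intro h; exfalso; omega)
          (by intro h _; exfalso; omega)
          (by intro _; linarith)
        first
          | exact hcore.1
          | exact hcore.2
    · by_cases ht0 : t = 0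
      · -- scenario II : B = Icc (m+1) n, q = n+1, m < n
        have hmn : m < n := by omega
        have hqn1 : q = n + 1 := by omega
        have hmZ : (m:ℤ) ≤ (n:ℤ) := by exact_mod_cast hm
        have hm0 : (0:ℤ) ≤ (m:ℤ) := by positivity
        set a : ℤ := -lamF C n (m+1) - P * (2*(n:ℤ)+3) with hadef
        have hdvd : P ∣ a := by
          rw [hadef]
          exact dvd_sub (dvd_neg.mpr (hdl (m+1))) (dvd_mul_right P _)
        have hconv3 := lamF_conv3 hC0 hmn
        have hcore := ineq_core n m q C a hn hm hq1 hq2 hC0 hCn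
          (by intro _ _
              rw [hadef]
              linarith)
          (by intro h _; exfalso; omega)
          (by intro h; exfalso; omega)
          (by intro h; exfalso; omega)
          (by intro _ _
              rw [hadef]
              linarith)
          (by intro h; exfalso; omega)
        exact ⟨a, hdvd, _, hBsub, hsum, hcore.1, hcore.2⟩
      · -- scenario III : t ≥ 1, q ≤ n, m < n
        have hmn : m < n := by omega
        have hqn : q ≤ n := by omega
        have hmZ : (m:ℤ) ≤ (n:ℤ) := by exact_mod_cast hm
        have hqZ : (q:ℤ) ≤ (n:ℤ) := by exact_mod_cast hqn
        have hm0 : (0:ℤ) ≤ (m:ℤ) := by positivity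
        have hq0 : (0:ℤ) ≤ (q:ℤ) := by positivity
        set N : ℤ := lamF C n (m+1) + lamF C n (n+m+1-q) with hNdef
        set a : ℤ := -(P * ((N - 2*(m:ℤ) - 2) / (2*P))) with hadef
        have hdvd : P ∣ a := by rw [hadef]; exact dvd_neg.mpr (dvd_mul_right P _)
        have h2P : (0:ℤ) < 2*P := by linarith
        have hdm := Int.mul_ediv_add_emod (N - 2*(m:ℤ) - 2) (2*P)
        have hr0 := Int.emod_nonneg (N - 2*(m:ℤ) - 2) (by linarith : (2*P) ≠ 0)
        have hr1 := Int.emod_lt_of_pos (N - 2*(m:ℤ) - 2) h2P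
        have ha1 : 2*(m:ℤ) + 2 - N ≤ 2*a := by rw [hadef]; linarith
        have ha2 : 2*a ≤ 2*(m:ℤ) + 2 - N + 2*P := by rw [hadef]; linarith
        have hN0 : 0 ≤ lamF C n (n+m+1-q) := lamF_nonneg hC0 n _
        have hcore := ineq_core n m q C a hn hm hq1 hq2 hC0 hCn
          (by -- hlow1
              intro h1 h2
              have hNle : N ≤ lamF C n m := by
                by_cases hq : q = n
                · have he : n+m+1-q = m+1 := by omega
                  have hconv3 := lamF_conv3 hC0 hmn
                  rw [hNdef, he]
                  linarith
                · have he : m+2 ≤ n+m+1-q := by omega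
                  have hmono := lamF_mono hC0 n he
                  have hconv2 := lamF_conv2 hC0 (show m+2 ≤ n by omega)
                  rw [hNdef]
                  linarith
              linarith
          )
          (by -- hup1
              intro hq hmq
              have hgap := lamF_gap hC0 (show n+m+1-q < n by omega)
              have he : n+m+2-q = (n+m+1-q) + 1 := by omega
              rw [he, hNdef] at *
              linarith)
          (by -- hlow2
              intro _
              rw [hNdef] at ha1
              linarith)
          (by -- hup2
              intro hq
              have hconv3 := lamF_conv3 hC0 (show m+1 < n by omega)
              rw [hNdef] at ha2
              linarith)
          (by intro _ hqq; exfalso; omega)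
          (by intro h; exfalso; omega)
        exact ⟨a, hdvd, _, hBsub, hsum, hcore.1, hcore.2⟩
end

section
/- Let p be an odd prime, ℓ a prime with ℓ ≠ p, M ≥ 1 an integer, and N ≥ 1 any bound. Then there exists an odd prime q > N with q not dividing ℓp and q ≢ 1 (mod p), such that the multiplicative order of ℓ in (ℤ/qℤ)^× and the multiplicative order of p in (ℤ/qℤ)^× are each strictly greater than M and each coprime to p. -/
lemma aux_order_gt (q m M : ℕ) (hq : q.Prime) (hm : 2 ≤ m) (hM : 1 ≤ M)
    (h : m ^ M < q) : M < orderOf (m : ZMod q) := by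
  haveI : Fact q.Prime := ⟨hq⟩
  have hmM : m ≤ m ^ M := Nat.le_self_pow (by omega) m
  have hne : (m : ZMod q) ≠ 0 := by
    rw [Ne, ZMod.natCast_eq_zero_iff]
    intro hdvd
    have := Nat.le_of_dvd (by omega) hdvd
    omega
  obtain ⟨u, hu⟩ := (isUnit_iff_ne_zero (a := (m : ZMod q))).mpr hne
  have hpos : 0 < orderOf (m : ZMod q) := by
    rw [← hu, orderOf_units]
    exact orderOf_pos u
  by_contra hle
  push_neg at hle
  set a := orderOf (m : ZMod q) with ha
  have hpow : ((m ^ a : ℕ) : ZMod q) = ((1 : ℕ) : ZMod q) := by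
    push_cast
    exact pow_orderOf_eq_one _
  have hmod : m ^ a ≡ 1 [MOD q] := (ZMod.natCast_eq_natCast_iff _ _ _).mp hpow
  have h1 : 1 ≤ m ^ a := Nat.one_le_pow _ _ (by omega)
  have h2 : 2 ≤ m ^ a := by
    calc 2 ≤ m := hm
    _ = m ^ 1 := (pow_one m).symm
    _ ≤ m ^ a := Nat.pow_le_pow_right (by omega) hpos
  have hdvd : q ∣ m ^ a - 1 := (Nat.modEq_iff_dvd' h1).mp hmod.symm
  have hle2 : q ≤ m ^ a - 1 := Nat.le_of_dvd (by omega) hdvd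
  have : m ^ a ≤ m ^ M := Nat.pow_le_pow_right (by omega) hle
  omega

/-- For `p` an odd prime, `ℓ ≠ p` prime, `M ≥ 1` and any bound `N ≥ 1`, there exists an
odd prime `q > N` with `q ∤ ℓp` and `q ≢ 1 (mod p)`, such that the multiplicative orders
of `ℓ` and of `p` in `(ℤ/qℤ)^×` are each `> M` and coprime to `p`. -/
theorem statement16 (p ℓ : ℕ) (hp : p.Prime) (hp2 : p ≠ 2) (hl : ℓ.Prime) (hlp : ℓ ≠ p)
    (M N : ℕ) (hM : 1 ≤ M) (hN : 1 ≤ N) :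
    ∃ q : ℕ, q.Prime ∧ Odd q ∧ N < q ∧ ¬ q ∣ ℓ * p ∧ ¬ (q ≡ 1 [MOD p]) ∧
      M < orderOf (ℓ : ZMod q) ∧ M < orderOf ((p : ℕ) : ZMod q) ∧
      Nat.Coprime (orderOf (ℓ : ZMod q)) p ∧ Nat.Coprime (orderOf ((p : ℕ) : ZMod q)) p := by
  haveI : Fact p.Prime := ⟨hp⟩
  haveI : NeZero p := ⟨hp.ne_zero⟩
  have hp3 : 3 ≤ p := by
    rcases hp.two_le.lt_or_eq with h | h
    · omega
    · omega
  have hl2 : 2 ≤ ℓ := hl.two_le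
  -- 2 is a unit mod p
  have hcop : Nat.Coprime 2 p := (Nat.coprime_primes Nat.prime_two hp).mpr (by omega)
  have hunit : IsUnit ((2 : ℕ) : ZMod p) := (ZMod.isUnit_iff_coprime 2 p).mpr hcop
  obtain ⟨q, hqgt, hqp, hqmod⟩ :=
    Nat.forall_exists_prime_gt_and_eq_mod hunit (max (max N 2) (max (ℓ ^ M) (p ^ M)))
  haveI : Fact q.Prime := ⟨hqp⟩
  have hqN : N < q := lt_of_le_of_lt (le_max_of_le_left (le_max_left _ _)) hqgt
  have hq2 : 2 < q := lt_of_le_of_lt (le_max_of_le_left (le_max_right _ _)) hqgt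
  have hqlM : ℓ ^ M < q := lt_of_le_of_lt (le_max_of_le_right (le_max_left _ _)) hqgt
  have hqpM : p ^ M < q := lt_of_le_of_lt (le_max_of_le_right (le_max_right _ _)) hqgt
  have hql : ℓ < q := lt_of_le_of_lt (Nat.le_self_pow (by omega) ℓ) hqlM
  have hqpp : p < q := lt_of_le_of_lt (Nat.le_self_pow (by omega) p) hqpM
  have hqmod2 : q ≡ 2 [MOD p] := (ZMod.natCast_eq_natCast_iff _ _ _).mp hqmod
  have hqnot1 : ¬ (q ≡ 1 [MOD p]) := by
    intro h
    have h21 : (2 : ℕ) ≡ 1 [MOD p] := hqmod2.symm.trans h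
    have : 2 % p = 1 % p := h21
    rw [Nat.mod_eq_of_lt (by omega), Nat.mod_eq_of_lt (by omega)] at this
    omega
  have hpq1 : ¬ p ∣ q - 1 := by
    intro h
    exact hqnot1 ((Nat.modEq_iff_dvd' (by omega)).mpr h).symm
  have hordl : M < orderOf (ℓ : ZMod q) := aux_order_gt q ℓ M hqp hl2 hM hqlM
  have hordp : M < orderOf ((p : ℕ) : ZMod q) := aux_order_gt q p M hqp (by omega) hM hqpM
  have hcopord : ∀ m : ℕ, (m : ZMod q) ≠ 0 → Nat.Coprime (orderOf (m : ZMod q)) p := by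
    intro m hm
    have hdvd : orderOf (m : ZMod q) ∣ q - 1 := ZMod.orderOf_dvd_card_sub_one hm
    rw [Nat.coprime_comm]
    apply (Nat.Prime.coprime_iff_not_dvd hp).mpr
    intro hpd
    exact hpq1 (hpd.trans hdvd)
  have hlne : (ℓ : ZMod q) ≠ 0 := by
    rw [Ne, ZMod.natCast_eq_zero_iff]
    intro h
    have := Nat.le_of_dvd (by omega) h
    omega
  have hpne : ((p : ℕ) : ZMod q) ≠ 0 := by
    rw [Ne, ZMod.natCast_eq_zero_iff]
    intro h
    have := Nat.le_of_dvd (by omega) h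
    omega
  refine ⟨q, hqp, hqp.odd_of_ne_two (by omega), hqN, ?_, hqnot1, hordl, hordp,
    hcopord ℓ hlne, hcopord p hpne⟩
  intro h
  rcases (Nat.Prime.dvd_mul hqp).mp h with h | h
  · have := Nat.le_of_dvd (by omega) h; omega
  · have := Nat.le_of_dvd (by omega) h; omega
end

section
/- Let p be an odd prime, ℓ a prime with ℓ ≠ p, S₀ a finite set of primes, F̄_p an algebraic closure of the field with p elements, and T a finite subset of the unit group F̄_p^×. Then there exists a prime q ∉ S₀ ∪ {ℓ, p} and a group homomorphism ψ : (ℤ/qℤ)^× → F̄_p^× such that ψ(ℓ mod q) ∉ T and ψ(p mod q) ∉ T. -/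
/-- Let `p` be an odd prime, `ℓ ≠ p` a prime, `S₀` a finite set of primes, and `T` a
finite subset of `F̄_p^×`.  Then there is a prime `q ∉ S₀ ∪ {ℓ, p}` and a group
homomorphism `ψ : (ℤ/qℤ)^× → F̄_p^×` with `ψ(ℓ mod q) ∉ T` and `ψ(p mod q) ∉ T`. -/
theorem statement17 (p : ℕ) [Fact p.Prime] (hp2 : p ≠ 2)
    (ℓ : ℕ) (hl : ℓ.Prime) (hlp : ℓ ≠ p)
    (S₀ : Finset ℕ) (hS₀ : ∀ r ∈ S₀, r.Prime)
    (T : Finset ((AlgebraicClosure (ZMod p))ˣ)) :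
    ∃ q : ℕ, q.Prime ∧ q ∉ S₀ ∧ q ≠ ℓ ∧ q ≠ p ∧
      ∃ ψ : (ZMod q)ˣ →* (AlgebraicClosure (ZMod p))ˣ,
        (∀ u : (ZMod q)ˣ, (u : ZMod q) = (ℓ : ZMod q) → ψ u ∉ T) ∧
        (∀ u : (ZMod q)ˣ, (u : ZMod q) = ((p : ℕ) : ZMod q) → ψ u ∉ T) := by
  classical
  set K := AlgebraicClosure (ZMod p) with hKdef
  have hp : p.Prime := Fact.out
  set M : ℕ := T.sup (fun t => orderOf t) with hM
  set N : ℕ := ℓ ^ M + p ^ M + S₀.sup id + ℓ + p with hN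
  -- Dirichlet: a prime q > N with q ≡ -1 (mod p)
  have hunit : IsUnit (-1 : ZMod p) := isUnit_one.neg
  obtain ⟨q, hqN, hq, hqmod⟩ := Nat.forall_exists_prime_gt_and_eq_mod hunit N
  haveI : Fact q.Prime := ⟨hq⟩
  have hl2 : 2 ≤ ℓ := hl.two_le
  have hp2' : 2 ≤ p := hp.two_le
  have hq2 : 2 ≤ q := hq.two_le
  have hqS : q ∉ S₀ := by
    intro h
    have : q ≤ S₀.sup id := Finset.le_sup (f := id) h
    omega
  have hqℓ : q ≠ ℓ := by omega
  have hqp : q ≠ p := by omega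
  -- p does not divide q - 1
  have hpq1 : ¬ p ∣ (q - 1) := by
    intro hdvd
    have h1 : ((q - 1 : ℕ) : ZMod p) = 0 := (ZMod.natCast_eq_zero_iff _ _).mpr hdvd
    have h2 : ((q : ℕ) : ZMod p) = 1 := by
      have hq' : q = (q - 1) + 1 := by omega
      rw [hq', Nat.cast_add, h1, Nat.cast_one, zero_add]
    rw [hqmod] at h2
    have h3 : ((2 : ℕ) : ZMod p) = 0 := by push_cast; linear_combination -h2
    have h4 : p ∣ 2 := (ZMod.natCast_eq_zero_iff _ _).mp h3
    have h5 : p ≤ 2 := Nat.le_of_dvd (by norm_num) h4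
    omega
  -- the cyclic group (ZMod q)ˣ has order n = q - 1
  set n : ℕ := Nat.card (ZMod q)ˣ with hn
  have hncard : n = q - 1 := by
    rw [hn, Nat.card_eq_fintype_card, ZMod.card_units]
  have hn0 : 0 < n := by omega
  haveI : NeZero n := ⟨hn0.ne'⟩
  haveI : NeZero ((n : ℕ) : K) := by
    refine ⟨fun h => ?_⟩
    have : p ∣ n := (CharP.cast_eq_zero_iff K p n).mp h
    rw [hncard] at this
    exact hpq1 this
  -- a primitive n-th root of unity in K
  obtain ⟨ζ, hζ⟩ := HasEnoughRootsOfUnity.exists_primitiveRoot K n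
  set ζu : Kˣ := (hζ.isUnit hn0.ne').unit with hζu_def
  have hζu : IsPrimitiveRoot ζu n := hζ.isUnit_unit hn0.ne'
  have hord : orderOf ζu = n := hζu.eq_orderOf.symm
  -- build the homomorphism
  have hker : (zmultiplesHom (Additive Kˣ) (Additive.ofMul ζu)) ((n : ℕ) : ℤ) = 0 := by
    have h1 : ζu ^ ((n : ℕ) : ℤ) = 1 := by rw [zpow_natCast, ← hord, pow_orderOf_eq_one]
    show ((n : ℕ) : ℤ) • (Additive.ofMul ζu) = 0
    rw [← ofMul_zpow, h1]
    rfl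
  set f0 : ZMod n →+ Additive Kˣ :=
    ZMod.lift n ⟨zmultiplesHom (Additive Kˣ) (Additive.ofMul ζu), hker⟩ with hf0
  set f : Multiplicative (ZMod n) →* Kˣ := AddMonoidHom.toMultiplicativeLeft f0 with hf
  have hfval : ∀ a : Multiplicative (ZMod n), f a = ζu ^ ((Multiplicative.toAdd a).val) := by
    intro a
    set x := Multiplicative.toAdd a with hx
    have ha : ((x.val : ℤ) : ZMod n) = x := by
      rw [Int.cast_natCast, ZMod.natCast_val, ZMod.cast_id]
    have h1 : f0 (((x.val : ℤ) : ZMod n)) = (x.val : ℤ) • (Additive.ofMul ζu) := by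
      rw [hf0, ZMod.lift_coe]
      rfl
    rw [ha] at h1
    show Additive.toMul (f0 x) = ζu ^ x.val
    rw [h1, ← ofMul_zpow, toMul_ofMul, zpow_natCast]
  have hfinj : Function.Injective f := by
    rw [injective_iff_map_eq_one]
    intro a ha
    rw [hfval a] at ha
    have hdvd : n ∣ (Multiplicative.toAdd a).val := by
      have h2 := orderOf_dvd_of_pow_eq_one ha
      rwa [hord] at h2
    have hlt : (Multiplicative.toAdd a).val < n := ZMod.val_lt (Multiplicative.toAdd a)
    have h0 : (Multiplicative.toAdd a).val = 0 := Nat.eq_zero_of_dvd_of_lt hdvd hlt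
    have h1 : Multiplicative.toAdd a = 0 := (ZMod.val_eq_zero _).mp h0
    exact Multiplicative.toAdd.injective h1
  set e : Multiplicative (ZMod n) ≃* (ZMod q)ˣ :=
    zmodCyclicMulEquiv inferInstance with he
  set ψ : (ZMod q)ˣ →* Kˣ := f.comp e.symm.toMonoidHom with hψ
  have hψinj : Function.Injective ψ := hfinj.comp e.symm.injective
  -- key counting argument
  have key : ∀ a : ℕ, 2 ≤ a → a ^ M < q →
      ∀ u : (ZMod q)ˣ, (u : ZMod q) = (a : ZMod q) → ψ u ∉ T := by
    intro a ha haq u hu ht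
    have h1 : orderOf (ψ u) ≤ M := Finset.le_sup (f := fun t => orderOf t) ht
    have h2 : orderOf u ≤ M := by rwa [orderOf_injective ψ hψinj u] at h1
    have h3 : 0 < orderOf u := orderOf_pos u
    set d := orderOf u with hd
    have h4 : ((a ^ d : ℕ) : ZMod q) = ((1 : ℕ) : ZMod q) := by
      have hu1 : ((u ^ d : (ZMod q)ˣ) : ZMod q) = 1 := by
        rw [pow_orderOf_eq_one u, Units.val_one]
      push_cast
      rw [← hu]
      rw [Units.val_pow_eq_pow_val] at hu1
      exact hu1
    have h6 : a ^ d ≡ 1 [MOD q] := (ZMod.natCast_eq_natCast_iff _ _ _).mp h4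
    have had : 1 < a ^ d := Nat.one_lt_pow h3.ne' (by omega)
    have h7 : q ∣ a ^ d - 1 := (Nat.modEq_iff_dvd' (by omega)).mp h6.symm
    have h8 : a ^ d ≤ a ^ M := Nat.pow_le_pow_right (by omega) h2
    have h9 : q ≤ a ^ d - 1 := Nat.le_of_dvd (by omega) h7
    omega
  exact ⟨q, hq, hqS, hqℓ, hqp, ψ,
    fun u hu => key ℓ hl2 (by omega) u hu,
    fun u hu => key p hp2' (by omega) u hu⟩
end
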